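/- arXiv:1705.06393 — 7 statements merged into one kernel-verified Lean document; each statement's English description precedes it below -/
import Mathlib

section
/- For every integral binary cubic form f = (a,b,c,d) ∈ ℤ⁴, the multiplication table ωθ = −ad, ω² = −ac + bω − aθ, θ² = −bd + dω − cθ defines a commutative, associative, unital ring structure on the free ℤ-module with basis ⟨1, ω, θ⟩, and the discriminant of this ring (the determinant of the matrix of traces (Tr(eᵢeⱼ)) with respect to the basis (1, ω, θ)) equals the discriminant D(f) = b²c² + 18abcd − 4ac³ − 4b³d − 27a²d² of the form f. -/
/-!
Everything reduces to polynomial identities in the coefficients. Writing elements of the ring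
in coordinates `x₀ + x₁ω + x₂θ`, the table gives an explicit bilinear product whose
commutativity and associativity are checked coordinatewise. Reading off diagonal entries,
`Tr(x) = 3x₀ + bx₁ − cx₂`, so the trace matrix is explicit and its determinant expands
to `D(f)`.
-/

namespace CubicForm

variable {R : Type*} [CommRing R] (a b c d : R)

/-- The product on `R ⊕ Rω ⊕ Rθ` given by the multiplication table of the cubic form
`(a, b, c, d)`, in coordinates with respect to `(1, ω, θ)`. -/
def mul : (Fin 3 → R) →ₗ[R] (Fin 3 → R) →ₗ[R] (Fin 3 → R) :=
  LinearMap.mk₂ R (fun x y =>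
    ![x 0 * y 0 - a * c * (x 1 * y 1) - a * d * (x 1 * y 2 + x 2 * y 1) - b * d * (x 2 * y 2),
      x 0 * y 1 + x 1 * y 0 + b * (x 1 * y 1) + d * (x 2 * y 2),
      x 0 * y 2 + x 2 * y 0 - a * (x 1 * y 1) - c * (x 2 * y 2)])
    (by intro x x' y; funext k; fin_cases k <;> simp <;> ring)
    (by intro r x y; funext k; fin_cases k <;> simp <;> ring)
    (by intro x y y'; funext k; fin_cases k <;> simp <;> ring)
    (by intro r x y; funext k; fin_cases k <;> simp <;> ring)

variable (x y z : Fin 3 → R)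

@[simp]
lemma mul_apply_zero : mul a b c d x y 0 =
    x 0 * y 0 - a * c * (x 1 * y 1) - a * d * (x 1 * y 2 + x 2 * y 1) - b * d * (x 2 * y 2) :=
  rfl

@[simp]
lemma mul_apply_one :
    mul a b c d x y 1 = x 0 * y 1 + x 1 * y 0 + b * (x 1 * y 1) + d * (x 2 * y 2) :=
  rfl

@[simp]
lemma mul_apply_two :
    mul a b c d x y 2 = x 0 * y 2 + x 2 * y 0 - a * (x 1 * y 1) - c * (x 2 * y 2) :=
  rfl

lemma one_mul : mul a b c d (Pi.single 0 1) x = x := by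
  funext k; fin_cases k <;> simp

lemma mul_comm : mul a b c d x y = mul a b c d y x := by
  funext k; fin_cases k <;> simp <;> ring

lemma mul_assoc : mul a b c d (mul a b c d x y) z = mul a b c d x (mul a b c d y z) := by
  funext k; fin_cases k <;> simp <;> ring

lemma omega_mul_theta :
    mul a b c d (Pi.single 1 1) (Pi.single 2 1) = (-(a * d)) • (Pi.single 0 1 : Fin 3 → R) := by
  funext k; fin_cases k <;> simp

lemma omega_mul_omega :
    mul a b c d (Pi.single 1 1) (Pi.single 1 1)
      = (-(a * c)) • (Pi.single 0 1 : Fin 3 → R) + b • (Pi.single 1 1 : Fin 3 → R)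
        + (-a) • (Pi.single 2 1 : Fin 3 → R) := by
  funext k; fin_cases k <;> simp

lemma theta_mul_theta :
    mul a b c d (Pi.single 2 1) (Pi.single 2 1)
      = (-(b * d)) • (Pi.single 0 1 : Fin 3 → R) + d • (Pi.single 1 1 : Fin 3 → R)
        + (-c) • (Pi.single 2 1 : Fin 3 → R) := by
  funext k; fin_cases k <;> simp

lemma trace_mul :
    LinearMap.trace R (Fin 3 → R) (mul a b c d x) = 3 * x 0 + b * x 1 - c * x 2 := by
  rw [LinearMap.trace_eq_matrix_trace R (Pi.basisFun R (Fin 3))]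
  simp only [Matrix.trace, LinearMap.toMatrix_eq_toMatrix', Matrix.diag_apply,
    LinearMap.toMatrix'_apply, Fin.sum_univ_three, mul_apply_zero, mul_apply_one, mul_apply_two,
    Pi.single_apply, Fin.reduceEq, ite_true, ite_false]
  ring

lemma det_traceMatrix :
    Matrix.det (Matrix.of fun i j : Fin 3 =>
        LinearMap.trace R (Fin 3 → R) (mul a b c d (mul a b c d (Pi.single i 1) (Pi.single j 1))))
      = b ^ 2 * c ^ 2 + 18 * a * b * c * d - 4 * a * c ^ 3 - 4 * b ^ 3 * d
        - 27 * a ^ 2 * d ^ 2 := by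
  simp only [Matrix.det_fin_three, Matrix.of_apply, trace_mul, mul_apply_zero, mul_apply_one,
    mul_apply_two, Pi.single_apply, Fin.reduceEq, ite_true, ite_false]
  ring

end CubicForm

/-- For every integral binary cubic form `f = (a,b,c,d)`, the multiplication table
`ωθ = −ad`, `ω² = −ac + bω − aθ`, `θ² = −bd + dω − cθ` defines a commutative, associative,
unital ring structure on the free ℤ-module `Fin 3 → ℤ` with basis `⟨1, ω, θ⟩ = (e₀,e₁,e₂)`,
and the discriminant of this ring — the determinant of the trace matrix `(Tr(eᵢeⱼ))` — equals
the discriminant `D(f) = b²c² + 18abcd − 4ac³ − 4b³d − 27a²d²` of the form. -/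
theorem cubic_ring_of_form (a b c d : ℤ) :
    ∃ mul : (Fin 3 → ℤ) →ₗ[ℤ] (Fin 3 → ℤ) →ₗ[ℤ] (Fin 3 → ℤ),
      (∀ x, mul (Pi.single 0 1) x = x) ∧
      (∀ x y, mul x y = mul y x) ∧
      (∀ x y z, mul (mul x y) z = mul x (mul y z)) ∧
      mul (Pi.single 1 1) (Pi.single 2 1) = (-(a * d)) • (Pi.single 0 1 : Fin 3 → ℤ) ∧
      mul (Pi.single 1 1) (Pi.single 1 1)
        = (-(a * c)) • (Pi.single 0 1 : Fin 3 → ℤ) + b • (Pi.single 1 1 : Fin 3 → ℤ)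
          + (-a) • (Pi.single 2 1 : Fin 3 → ℤ) ∧
      mul (Pi.single 2 1) (Pi.single 2 1)
        = (-(b * d)) • (Pi.single 0 1 : Fin 3 → ℤ) + d • (Pi.single 1 1 : Fin 3 → ℤ)
          + (-c) • (Pi.single 2 1 : Fin 3 → ℤ) ∧
      Matrix.det (Matrix.of fun i j : Fin 3 =>
          LinearMap.trace ℤ (Fin 3 → ℤ) (mul (mul (Pi.single i 1) (Pi.single j 1))))
        = b ^ 2 * c ^ 2 + 18 * a * b * c * d - 4 * a * c ^ 3 - 4 * b ^ 3 * d
          - 27 * a ^ 2 * d ^ 2 :=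
  ⟨CubicForm.mul a b c d, CubicForm.one_mul a b c d, CubicForm.mul_comm a b c d,
    CubicForm.mul_assoc a b c d, CubicForm.omega_mul_theta a b c d,
    CubicForm.omega_mul_omega a b c d, CubicForm.theta_mul_theta a b c d,
    CubicForm.det_traceMatrix a b c d⟩
end

section
/- For every g ∈ GL₂(ℝ) and all x, y ∈ ℝ⁴, the alternating pairing satisfies ⟨x, y⟩ = ⟨g·x, g^ι·y⟩, where g^ι = g/det(g); moreover g^ι = w·(g⁻¹)ᵗ·w⁻¹ where w is the matrix with rows (0,−1) and (1,0). -/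
/-- The action of a 2×2 matrix `g` on the coefficient vector `x = (a,b,c,d)` of the binary
cubic form `a u³ + b u²v + c uv² + d v³`, given by `(g·f)(u,v) = f((u,v)·g)`. -/
def cubicAct (g : Matrix (Fin 2) (Fin 2) ℝ) (x : Fin 4 → ℝ) : Fin 4 → ℝ :=
  ![x 0 * g 0 0 ^ 3 + x 1 * g 0 0 ^ 2 * g 0 1 + x 2 * g 0 0 * g 0 1 ^ 2 + x 3 * g 0 1 ^ 3,
    3 * x 0 * g 0 0 ^ 2 * g 1 0 + x 1 * (g 0 0 ^ 2 * g 1 1 + 2 * g 0 0 * g 0 1 * g 1 0)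
      + x 2 * (2 * g 0 0 * g 0 1 * g 1 1 + g 1 0 * g 0 1 ^ 2) + 3 * x 3 * g 0 1 ^ 2 * g 1 1,
    3 * x 0 * g 0 0 * g 1 0 ^ 2 + x 1 * (2 * g 0 0 * g 1 0 * g 1 1 + g 1 0 ^ 2 * g 0 1)
      + x 2 * (g 0 0 * g 1 1 ^ 2 + 2 * g 1 0 * g 0 1 * g 1 1) + 3 * x 3 * g 0 1 * g 1 1 ^ 2,
    x 0 * g 1 0 ^ 3 + x 1 * g 1 0 ^ 2 * g 1 1 + x 2 * g 1 0 * g 1 1 ^ 2 + x 3 * g 1 1 ^ 3]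

/-- The alternating pairing `⟨x,y⟩ = x₄y₁ − (1/3)x₃y₂ + (1/3)x₂y₃ − x₁y₄` on the space of
binary cubic forms. -/
noncomputable def cubicPair (x y : Fin 4 → ℝ) : ℝ :=
  x 3 * y 0 - (1/3) * x 2 * y 1 + (1/3) * x 1 * y 2 - x 0 * y 3

/-!
The representation of `GL₂` on binary cubic forms is `Sym³` of the standard one, and the pairing
is the `Sym³` of the determinant pairing, so `⟨g·x, g·y⟩ = (det g)³ ⟨x, y⟩`. Since the action is
homogeneous of degree three in `g`, replacing `g` by `g / det g` in the second slot divides by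
`(det g)³`. The identity `g / det g = w (g⁻¹)ᵀ w⁻¹` is conjugation of the transposed adjugate
by the rotation `w`.
-/

namespace Matrix

theorem mul_adjugate_transpose_fin_two {R : Type*} [CommRing R] (A : Matrix (Fin 2) (Fin 2) R) :
    !![(0 : R), -1; 1, 0] * A.adjugateᵀ = A * !![(0 : R), -1; 1, 0] := by
  ext i j
  fin_cases i <;> fin_cases j <;> simp [adjugate_fin_two, mul_apply, Fin.sum_univ_two]

theorem conj_inv_transpose_fin_two {K : Type*} [Field K] (A : Matrix (Fin 2) (Fin 2) K) :
    !![(0 : K), -1; 1, 0] * A⁻¹ᵀ * (!![(0 : K), -1; 1, 0])⁻¹ = A.det⁻¹ • A := by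
  have hw : IsUnit (!![(0 : K), -1; 1, 0]).det := by simp [det_fin_two]
  rw [inv_def, Ring.inverse_eq_inv, transpose_smul, Matrix.mul_smul,
    mul_adjugate_transpose_fin_two, Matrix.smul_mul, mul_nonsing_inv_cancel_right _ _ hw]

end Matrix

theorem cubicAct_smul (c : ℝ) (g : Matrix (Fin 2) (Fin 2) ℝ) (x : Fin 4 → ℝ) :
    cubicAct (c • g) x = c ^ 3 • cubicAct g x := by
  funext i
  fin_cases i <;> simp [cubicAct] <;> ring

theorem cubicPair_smul_right (c : ℝ) (x y : Fin 4 → ℝ) :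
    cubicPair x (c • y) = c * cubicPair x y := by
  simp only [cubicPair, Pi.smul_apply, smul_eq_mul]
  ring

theorem cubicPair_cubicAct (g : Matrix (Fin 2) (Fin 2) ℝ) (x y : Fin 4 → ℝ) :
    cubicPair (cubicAct g x) (cubicAct g y) = g.det ^ 3 * cubicPair x y := by
  simp only [cubicPair, cubicAct, Matrix.det_fin_two, Matrix.cons_val_zero, Matrix.cons_val_one,
    Matrix.head_cons, Matrix.cons_val_two, Matrix.tail_cons, Matrix.cons_val_three]
  ring

/-- For `g ∈ GL₂(ℝ)` and `g^ι = g / det g` one has `g^ι = w (g⁻¹)ᵗ w⁻¹` with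
`w = !![0,-1;1,0]`, and the alternating pairing satisfies `⟨x,y⟩ = ⟨g·x, g^ι·y⟩` for the
twisted action on binary cubic forms. -/
theorem cubicPair_invariant (g : Matrix (Fin 2) (Fin 2) ℝ) (hg : IsUnit g.det) :
    (g.det⁻¹ • g = !![(0:ℝ), -1; 1, 0] * g⁻¹.transpose * (!![(0:ℝ), -1; 1, 0])⁻¹) ∧
    ∀ x y : Fin 4 → ℝ,
      cubicPair x y = cubicPair (cubicAct g x) (cubicAct (g.det⁻¹ • g) y) := by
  refine ⟨(Matrix.conj_inv_transpose_fin_two g).symm, fun x y => ?_⟩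
  rw [cubicAct_smul, cubicPair_smul_right, cubicPair_cubicAct, ← mul_assoc, ← mul_pow,
    inv_mul_cancel₀ hg.ne_zero, one_pow, one_mul]
end

section
/- Let G⁺ = {g ∈ GL₂(ℝ) : det g > 0} act on binary cubic forms by the twisted action, and set x₊ = (1/√2, 0, −1/√2, 0) and x₋ = (1/√2, 0, 1/√2, 0). Then D(x₊) = 1 and D(x₋) = −1; every x ∈ ℝ⁴ with D(x) > 0 equals g·x₊ for some g ∈ G⁺, and every x ∈ ℝ⁴ with D(x) < 0 equals g·x₋ for some g ∈ G⁺; the stabilizer of x₊ in G⁺ is a group of order 3, and the stabilizer of x₋ in G⁺ is trivial. -/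
/-- The discriminant of the binary cubic form with coefficients `(a,b,c,d)`. -/
def cubicDisc (x : Fin 4 → ℝ) : ℝ :=
  x 1 ^ 2 * x 2 ^ 2 + 18 * x 0 * x 1 * x 2 * x 3 - 4 * x 0 * x 2 ^ 3 - 4 * x 1 ^ 3 * x 3
    - 27 * x 0 ^ 2 * x 3 ^ 2

/-- The base point `x₊ = (1/√2, 0, −1/√2, 0)` of the positive-discriminant orbit. -/
noncomputable def xplus : Fin 4 → ℝ := ![1 / Real.sqrt 2, 0, -(1 / Real.sqrt 2), 0]

/-- The base point `x₋ = (1/√2, 0, 1/√2, 0)` of the negative-discriminant orbit. -/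
noncomputable def xminus : Fin 4 → ℝ := ![1 / Real.sqrt 2, 0, 1 / Real.sqrt 2, 0]

open Polynomial Filter

theorem Real.exists_isRoot_of_odd_natDegree {P : ℝ[X]} (hP : Odd P.natDegree) :
    ∃ x, P.IsRoot x := by
  wlog hlc : 0 ≤ P.leadingCoeff generalizing P
  · obtain ⟨x, hx⟩ := this (P := -P) (by rwa [natDegree_neg]) (by rw [leadingCoeff_neg]; linarith)
    exact ⟨x, by simpa using hx⟩
  have hcomp_deg : (P.comp (-X)).natDegree = P.natDegree := by simp [natDegree_comp]
  have hcomp_lc : (P.comp (-X)).leadingCoeff = -P.leadingCoeff := by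
    rw [leadingCoeff_comp (by simp)]
    simp [hP.neg_one_pow]
  have htop : Tendsto (fun x => P.eval x) atTop atTop :=
    P.tendsto_atTop_of_leadingCoeff_nonneg (natDegree_pos_iff_degree_pos.mp hP.pos) hlc
  have hbot : Tendsto (fun x => P.eval x) atBot atBot := by
    have := (P.comp (-X)).tendsto_atBot_of_leadingCoeff_nonpos
      (natDegree_pos_iff_degree_pos.mp (hcomp_deg ▸ hP.pos)) (by linarith [hcomp_lc])
    simpa [Function.comp_def] using this.comp tendsto_neg_atBot_atTop
  exact P.continuous.surjective htop hbot 0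

lemma exists_cubic_root {a : ℝ} (ha : a ≠ 0) (b c d : ℝ) :
    ∃ t, a * t ^ 3 + b * t ^ 2 + c * t + d = 0 := by
  obtain ⟨t, ht⟩ := Real.exists_isRoot_of_odd_natDegree
    (P := C a * X ^ 3 + C b * X ^ 2 + C c * X + C d) (by rw [natDegree_cubic ha]; decide)
  exact ⟨t, by simpa using ht⟩

lemma cubicAct_one (x : Fin 4 → ℝ) : cubicAct 1 x = x := by
  ext i; fin_cases i <;> simp [cubicAct]

lemma cubicAct_mul (g h : Matrix (Fin 2) (Fin 2) ℝ) (x : Fin 4 → ℝ) :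
    cubicAct (g * h) x = cubicAct g (cubicAct h x) := by
  ext i; fin_cases i <;> simp [cubicAct, Matrix.mul_apply] <;> ring

lemma cubicDisc_cubicAct (g : Matrix (Fin 2) (Fin 2) ℝ) (x : Fin 4 → ℝ) :
    cubicDisc (cubicAct g x) = g.det ^ 6 * cubicDisc x := by
  simp [cubicDisc, cubicAct, Matrix.det_fin_two]; ring

lemma cubicDisc_reduced (a c : ℝ) : cubicDisc ![a, 0, c, 0] = -4 * a * c ^ 3 := by
  simp [cubicDisc]

/-- The substitution `(u, v) ↦ (v - s u, u)` with `s = x 2 / (2 * x 1)`. -/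
lemma cubicAct_shear_swap (x : Fin 4 → ℝ) (h0 : x 0 = 0) (h1 : x 1 ≠ 0) :
    cubicAct !![-(x 2 / (2 * x 1)), 1; 1, 0] x = ![x 3 - x 2 ^ 2 / (4 * x 1), 0, x 1, 0] := by
  ext i; fin_cases i <;> simp [cubicAct, h0] <;> field_simp <;> ring

lemma cubicAct_diagonal_reduced (α β a c : ℝ) :
    cubicAct !![α, 0; 0, β] ![a, 0, c, 0] = ![a * α ^ 3, 0, c * α * β ^ 2, 0] := by
  ext i; fin_cases i <;> simp [cubicAct]; ring

lemma cubicAct_upperTriangular_reduced (A B D a c : ℝ) :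
    cubicAct !![A, B; 0, D] ![a, 0, c, 0] =
      ![a * A ^ 3 + c * A * B ^ 2, 2 * c * A * B * D, c * A * D ^ 2, 0] := by
  ext i; fin_cases i <;> simp [cubicAct] <;> ring

lemma cubicAct_reflection_reduced (a c : ℝ) :
    cubicAct !![1, 0; 0, -1] ![a, 0, c, 0] = ![a, 0, c, 0] := by
  ext i; fin_cases i <;> simp [cubicAct]

lemma apply_one_zero_mul_eq_zero_of_cubicAct_reduced_eq_self {g : Matrix (Fin 2) (Fin 2) ℝ}
    {a c : ℝ} (hfix : cubicAct g ![a, 0, c, 0] = ![a, 0, c, 0]) :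
    g 1 0 * (a * g 1 0 ^ 2 + c * g 1 1 ^ 2) = 0 :=
  calc g 1 0 * (a * g 1 0 ^ 2 + c * g 1 1 ^ 2) = cubicAct g ![a, 0, c, 0] 3 := by
        simp [cubicAct]; ring
    _ = 0 := by rw [hfix]; rfl

lemma exists_cubicAct_apply_zero_eq_zero (x : Fin 4 → ℝ) :
    ∃ g : Matrix (Fin 2) (Fin 2) ℝ, g.det ≠ 0 ∧ cubicAct g x 0 = 0 := by
  by_cases h0 : x 0 = 0
  · exact ⟨1, by simp, by rw [cubicAct_one, h0]⟩
  obtain ⟨t, ht⟩ := exists_cubic_root h0 (x 1) (x 2) (x 3)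
  refine ⟨!![t, 1; -1, t], ?_, by simpa [cubicAct] using ht⟩
  rw [Matrix.det_fin_two_of]
  nlinarith [sq_nonneg t]

lemma exists_cubicAct_eq_reduced {x : Fin 4 → ℝ} (hx : cubicDisc x ≠ 0) :
    ∃ (g : Matrix (Fin 2) (Fin 2) ℝ) (a c : ℝ), g.det ≠ 0 ∧ cubicAct g x = ![a, 0, c, 0] := by
  obtain ⟨g, hg, hy0⟩ := exists_cubicAct_apply_zero_eq_zero x
  have hy1 : cubicAct g x 1 ≠ 0 := by
    intro hy1
    apply mul_ne_zero (pow_ne_zero 6 hg) hx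
    rw [← cubicDisc_cubicAct]
    simp [cubicDisc, hy0, hy1]
  refine ⟨_ * g, _, _, ?_, by rw [cubicAct_mul, cubicAct_shear_swap _ hy0 hy1]⟩
  rw [Matrix.det_mul, Matrix.det_fin_two_of]
  simpa using hg

lemma exists_cubicAct_reduced_eq_reduced {a c a' c' : ℝ} (h : 0 < a * c * (a' * c')) :
    ∃ g : Matrix (Fin 2) (Fin 2) ℝ, g.det ≠ 0 ∧ cubicAct g ![a, 0, c, 0] = ![a', 0, c', 0] := by
  have ha : a ≠ 0 := by rintro rfl; simp at h
  have hc : c ≠ 0 := by rintro rfl; simp at h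
  obtain ⟨α, hα⟩ := exists_cubic_root ha 0 0 (-a')
  have hα' : a * α ^ 3 = a' := by linarith
  have hαcc' : 0 < α * c * c' := by
    rw [← hα', show a * c * (a * α ^ 3 * c') = (a * α) ^ 2 * (α * c * c') by ring] at h
    exact pos_of_mul_pos_right h (sq_nonneg _)
  have hα0 : α ≠ 0 := by rintro rfl; simp at hαcc'
  have hq : 0 < c' / (c * α) := by
    rw [show c' / (c * α) = α * c * c' / (c * α) ^ 2 by field_simp]
    positivity
  refine ⟨!![α, 0; 0, √(c' / (c * α))], ?_, ?_⟩
  · rw [Matrix.det_fin_two_of]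
    simpa using ⟨hα0, (Real.sqrt_pos.mpr hq).ne'⟩
  · rw [cubicAct_diagonal_reduced, hα', Real.sq_sqrt hq.le]
    field_simp

lemma exists_pos_det_of_cubicAct_eq_reduced {g : Matrix (Fin 2) (Fin 2) ℝ} {x : Fin 4 → ℝ}
    {a c : ℝ} (hg : g.det ≠ 0) (h : cubicAct g x = ![a, 0, c, 0]) :
    ∃ g' : Matrix (Fin 2) (Fin 2) ℝ, 0 < g'.det ∧ x = cubicAct g' ![a, 0, c, 0] := by
  have hx : x = cubicAct g⁻¹ ![a, 0, c, 0] := by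
    rw [← h, ← cubicAct_mul, Matrix.nonsing_inv_mul g (isUnit_iff_ne_zero.mpr hg), cubicAct_one]
  have hg' : g⁻¹.det ≠ 0 := by simpa [Matrix.det_nonsing_inv] using hg
  rcases hg'.lt_or_gt with hneg | hpos
  · refine ⟨g⁻¹ * !![1, 0; 0, -1], ?_, ?_⟩
    · simpa [Matrix.det_fin_two_of] using hneg
    · rw [cubicAct_mul, cubicAct_reflection_reduced, hx]
  · exact ⟨g⁻¹, hpos, hx⟩

lemma exists_pos_det_eq_cubicAct_reduced {x : Fin 4 → ℝ} {a c : ℝ}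
    (hx : 0 < cubicDisc x * cubicDisc ![a, 0, c, 0]) :
    ∃ g : Matrix (Fin 2) (Fin 2) ℝ, 0 < g.det ∧ x = cubicAct g ![a, 0, c, 0] := by
  obtain ⟨g, a', c', hg, hgx⟩ := exists_cubicAct_eq_reduced (left_ne_zero_of_mul hx.ne')
  have hsign : 0 < a' * c' * (a * c) := by
    have := mul_pos (pow_pos (pow_two_pos_of_ne_zero hg) 3) hx
    rw [← pow_mul, ← mul_assoc, ← cubicDisc_cubicAct, hgx, cubicDisc_reduced,
      cubicDisc_reduced] at this
    nlinarith [sq_nonneg (c' * c)]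
  obtain ⟨h, hh, hhx⟩ := exists_cubicAct_reduced_eq_reduced hsign
  refine exists_pos_det_of_cubicAct_eq_reduced (g := h * g) ?_ (by rw [cubicAct_mul, hgx, hhx])
  rw [Matrix.det_mul]
  exact mul_ne_zero hh hg

lemma eq_one_of_cubicAct_reduced_eq_self {g : Matrix (Fin 2) (Fin 2) ℝ} {a c : ℝ} (ha : a ≠ 0)
    (hc : c ≠ 0) (hdet : 0 < g.det) (hg10 : g 1 0 = 0)
    (hfix : cubicAct g ![a, 0, c, 0] = ![a, 0, c, 0]) : g = 1 := by
  rw [Matrix.eta_fin_two g, hg10] at hfix hdet ⊢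
  rw [cubicAct_upperTriangular_reduced] at hfix
  simp only [Matrix.vecCons_inj] at hfix
  obtain ⟨e0, e1, e2, -⟩ := hfix
  rw [Matrix.det_fin_two_of, mul_zero, sub_zero] at hdet
  have hAD : g 0 0 * g 1 1 ^ 2 = 1 := mul_left_cancel₀ hc (by linear_combination e2)
  have hB : g 0 1 = 0 := by
    have h : 2 * c * (g 0 0 * g 1 1) * g 0 1 = 0 := by linear_combination e1
    simpa [hc, hdet.ne'] using h
  have hA : g 0 0 = 1 := by
    rw [hB] at e0
    have : g 0 0 ^ 3 = 1 := mul_left_cancel₀ ha (by linear_combination e0)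
    simpa [show ¬Even 3 by decide] using (pow_eq_one_iff_of_ne_zero (by norm_num)).mp this
  have hD : g 1 1 = 1 := by
    rw [hA, one_mul] at hAD hdet
    exact (pow_eq_one_iff_of_nonneg hdet.le (by norm_num)).mp hAD
  rw [hA, hB, hD, Matrix.one_fin_two]

lemma eq_one_of_cubicAct_reduced_eq_self_of_mul_pos {g : Matrix (Fin 2) (Fin 2) ℝ} {a c : ℝ}
    (hac : 0 < a * c) (hdet : 0 < g.det) (hfix : cubicAct g ![a, 0, c, 0] = ![a, 0, c, 0]) :
    g = 1 := by
  have ha : a ≠ 0 := by rintro rfl; simp at hac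
  have hc : c ≠ 0 := by rintro rfl; simp at hac
  refine eq_one_of_cubicAct_reduced_eq_self ha hc hdet ?_ hfix
  by_contra h10
  have : a * g 1 0 ^ 2 + c * g 1 1 ^ 2 = 0 :=
    (mul_eq_zero.mp (apply_one_zero_mul_eq_zero_of_cubicAct_reduced_eq_self hfix)).resolve_left h10
  nlinarith [sq_pos_of_ne_zero (mul_ne_zero ha h10), mul_nonneg hac.le (sq_nonneg (g 1 1)),
    congrArg (a * ·) this]

/-- `cubicRho` permutes cyclically the three lines `u = 0`, `u = v`, `u = -v` on which `u³ - uv²`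
vanishes. -/
noncomputable def cubicRho : Matrix (Fin 2) (Fin 2) ℝ := !![-1/2, -3/2; 1/2, -1/2]

lemma cubicRho_mul_cubicRho : cubicRho * cubicRho = !![-1/2, 3/2; -1/2, -1/2] := by
  ext i j; fin_cases i <;> fin_cases j <;> simp [cubicRho] <;> norm_num

lemma cubicRho_mul_cubicRho_mul_cubicRho : cubicRho * cubicRho * cubicRho = 1 := by
  rw [cubicRho_mul_cubicRho]
  ext i j; fin_cases i <;> fin_cases j <;> simp [cubicRho] <;> norm_num

lemma det_cubicRho : cubicRho.det = 1 := by
  rw [cubicRho, Matrix.det_fin_two_of]; norm_num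

lemma cubicAct_cubicRho (a : ℝ) : cubicAct cubicRho ![a, 0, -a, 0] = ![a, 0, -a, 0] := by
  ext i; fin_cases i <;> simp [cubicAct, cubicRho] <;> ring

lemma posDet_cubicAct_eq_self_iff {a : ℝ} (ha : a ≠ 0) (g : Matrix (Fin 2) (Fin 2) ℝ) :
    (0 < g.det ∧ cubicAct g ![a, 0, -a, 0] = ![a, 0, -a, 0]) ↔
      g = 1 ∨ g = cubicRho ∨ g = cubicRho * cubicRho := by
  constructor
  · rintro ⟨hdet, hfix⟩
    have hstab : ∀ h, 0 < h.det → cubicAct h ![a, 0, -a, 0] = ![a, 0, -a, 0] →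
        (g * h) 1 0 = 0 → g * h = 1 := fun h hh hhfix hgh =>
      eq_one_of_cubicAct_reduced_eq_self ha (neg_ne_zero.mpr ha)
        (by rw [Matrix.det_mul]; positivity) hgh (by rw [cubicAct_mul, hhfix, hfix])
    have hzero : g 1 0 * (g 1 0 - g 1 1) * (g 1 0 + g 1 1) = 0 := by
      apply mul_left_cancel₀ ha
      linear_combination apply_one_zero_mul_eq_zero_of_cubicAct_reduced_eq_self hfix
    rcases mul_eq_zero.mp hzero with h | h
    · rcases mul_eq_zero.mp h with h | h
      · exact .inl (eq_one_of_cubicAct_reduced_eq_self ha (neg_ne_zero.mpr ha) hdet h hfix)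
      · refine .inr (.inr ?_)
        have hg : g * cubicRho = 1 :=
          hstab cubicRho (by rw [det_cubicRho]; norm_num) (cubicAct_cubicRho a)
            (by simp [Matrix.mul_apply, cubicRho]; linear_combination -h / 2)
        calc g = g * (cubicRho * (cubicRho * cubicRho)) := by
              rw [← mul_assoc cubicRho, cubicRho_mul_cubicRho_mul_cubicRho, mul_one]
          _ = cubicRho * cubicRho := by rw [← mul_assoc, hg, one_mul]
    · refine .inr (.inl ?_)
      have hg : g * (cubicRho * cubicRho) = 1 :=
        hstab (cubicRho * cubicRho) (by rw [Matrix.det_mul, det_cubicRho]; norm_num)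
          (by rw [cubicAct_mul, cubicAct_cubicRho, cubicAct_cubicRho])
          (by simp [Matrix.mul_apply, cubicRho_mul_cubicRho]; linear_combination -h / 2)
      calc g = g * (cubicRho * cubicRho * cubicRho) := by rw [cubicRho_mul_cubicRho_mul_cubicRho, mul_one]
        _ = cubicRho := by rw [← mul_assoc, hg, one_mul]
  · rintro (rfl | rfl | rfl)
    · exact ⟨by simp, cubicAct_one _⟩
    · exact ⟨by rw [det_cubicRho]; norm_num, cubicAct_cubicRho a⟩
    · exact ⟨by rw [Matrix.det_mul, det_cubicRho]; norm_num,
        by rw [cubicAct_mul, cubicAct_cubicRho, cubicAct_cubicRho]⟩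

lemma ncard_posDet_cubicAct_eq_self {a : ℝ} (ha : a ≠ 0) :
    {g : Matrix (Fin 2) (Fin 2) ℝ | 0 < g.det ∧ cubicAct g ![a, 0, -a, 0] = ![a, 0, -a, 0]}.ncard
      = 3 := by
  refine Set.ncard_eq_three.mpr ⟨1, cubicRho, cubicRho * cubicRho, fun h => ?_, fun h => ?_,
    fun h => ?_, Set.ext fun g => by simpa using posDet_cubicAct_eq_self_iff ha g⟩
  · have := congrFun₂ h 0 0
    norm_num [cubicRho] at this
  · have := congrFun₂ h 0 0
    norm_num [cubicRho_mul_cubicRho] at this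
  · have := congrFun₂ h 0 1
    norm_num [cubicRho, cubicRho_mul_cubicRho] at this

lemma one_div_sqrt_two_pow_four : (1 / √2 : ℝ) ^ 4 = 1 / 4 := by
  rw [show (4 : ℕ) = 2 * 2 from rfl, pow_mul, div_pow, Real.sq_sqrt zero_le_two]; norm_num

lemma cubicDisc_xplus : cubicDisc xplus = 1 := by
  rw [xplus, cubicDisc_reduced]
  linear_combination 4 * one_div_sqrt_two_pow_four

lemma cubicDisc_xminus : cubicDisc xminus = -1 := by
  rw [xminus, cubicDisc_reduced]
  linear_combination -4 * one_div_sqrt_two_pow_four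

/-- `D(x₊) = 1`, `D(x₋) = −1`; the forms of positive (resp. negative) discriminant form a
single orbit of `G⁺ = {g : det g > 0}` with representative `x₊` (resp. `x₋`); the stabilizer
of `x₊` in `G⁺` has order 3, and the stabilizer of `x₋` in `G⁺` is trivial. -/
theorem cubic_orbit_description :
    cubicDisc xplus = 1 ∧
    cubicDisc xminus = -1 ∧
    (∀ x : Fin 4 → ℝ, 0 < cubicDisc x →
      ∃ g : Matrix (Fin 2) (Fin 2) ℝ, 0 < g.det ∧ x = cubicAct g xplus) ∧
    (∀ x : Fin 4 → ℝ, cubicDisc x < 0 →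
      ∃ g : Matrix (Fin 2) (Fin 2) ℝ, 0 < g.det ∧ x = cubicAct g xminus) ∧
    Nat.card {g : Matrix (Fin 2) (Fin 2) ℝ // 0 < g.det ∧ cubicAct g xplus = xplus} = 3 ∧
    (∀ g : Matrix (Fin 2) (Fin 2) ℝ, 0 < g.det → cubicAct g xminus = xminus → g = 1) := by
  have hs : (0 : ℝ) < 1 / √2 := by positivity
  refine ⟨cubicDisc_xplus, cubicDisc_xminus, fun x hx => ?_, fun x hx => ?_,
    (Nat.card_coe_set_eq _).trans (ncard_posDet_cubicAct_eq_self hs.ne'),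
    fun g hdet hfix => eq_one_of_cubicAct_reduced_eq_self_of_mul_pos (mul_pos hs hs) hdet hfix⟩
  · refine exists_pos_det_eq_cubicAct_reduced ?_
    change 0 < cubicDisc x * cubicDisc xplus
    rwa [cubicDisc_xplus, mul_one]
  · refine exists_pos_det_eq_cubicAct_reduced ?_
    change 0 < cubicDisc x * cubicDisc xminus
    rwa [cubicDisc_xminus, mul_neg_one, neg_pos]
end

section
/- Let ρ : ℤ∖{0} → ℂ and C > 0 satisfy ∑_{0<|n|≤X} |ρ(n)| ≤ C·X for all real X ≥ 1. Then for every ε > 0 there exists a constant C′ depending only on C and ε such that for every sign ε₁ ∈ {+1,−1}, every integer q ≥ 1, and every complex number x with Re(x) ≥ ε, the double series ∑_{ℓ,m≥1} ρ(ε₁·3ℓmq) · ℓ^{−(1+x)} · (3mq)^{−(1+3x)} converges absolutely and its absolute value is at most C′. -/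
/-! Put `n = 3q(ℓ+1)(m+1)`. The `(ℓ, m)` term is at most `|ρ(ε₁ n)| n^{-(1+ε)}`, and a given `n`
arises from at most `d(n) ≤ K n^{ε/2}` pairs (the divisor bound, from the multiplicativity of `d`).
So the double series is dominated by `K ∑ₙ |ρ(ε₁ n)| n^{-(1+ε/2)}`, and summation by parts against
`∑_{n ≤ N} |ρ(ε₁ n)| ≤ C N` bounds this by `K C ζ(1 + ε/2)`, independently of `ε₁`, `q` and `x`. -/

open Finset Real

theorem add_one_le_mul_rpow_mul {p δ : ℝ} (hp : 2 ≤ p) (hδ : 0 < δ) (a : ℕ) :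
    (a + 1 : ℝ) ≤ (1 + (δ * log 2)⁻¹) * p ^ (a * δ) := by
  have hlog : 0 < δ * log 2 := mul_pos hδ (log_pos one_lt_two)
  have hexp : a * δ * log 2 + 1 ≤ (2 : ℝ) ^ (a * δ) := by
    rw [rpow_def_of_pos two_pos, mul_comm (log 2)]
    exact add_one_le_exp _
  have h1 : (1 : ℝ) ≤ 2 ^ (a * δ) := one_le_rpow one_le_two (by positivity)
  have ha : (a : ℝ) ≤ 2 ^ (a * δ) * (δ * log 2)⁻¹ := by
    rw [le_mul_inv_iff₀ hlog]; nlinarith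
  calc (a + 1 : ℝ) ≤ (1 + (δ * log 2)⁻¹) * 2 ^ (a * δ) := by linarith
    _ ≤ (1 + (δ * log 2)⁻¹) * p ^ (a * δ) := by gcongr

theorem add_one_le_rpow_mul {p δ : ℝ} (hp0 : 0 ≤ p) (hp : 2 ≤ p ^ δ) (a : ℕ) :
    (a + 1 : ℝ) ≤ p ^ (a * δ) :=
  calc (a + 1 : ℝ) ≤ 2 ^ a := by exact_mod_cast Nat.lt_two_pow_self
    _ ≤ (p ^ δ) ^ a := by gcongr
    _ = p ^ (a * δ) := by rw [mul_comm, rpow_mul hp0, rpow_natCast]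

theorem Nat.rpow_eq_prod_primeFactors {n : ℕ} (hn : n ≠ 0) (δ : ℝ) :
    (n : ℝ) ^ δ = ∏ p ∈ n.primeFactors, (p : ℝ) ^ (n.factorization p * δ) := by
  conv_lhs => rw [← Nat.prod_factorization_pow_eq_self hn]
  rw [Finsupp.prod, Nat.support_factorization, Nat.cast_prod,
    ← finsetProd_rpow _ _ (fun p _ => by positivity)]
  refine prod_congr rfl fun p _ => ?_
  rw [Nat.cast_pow, ← rpow_natCast, ← rpow_mul (Nat.cast_nonneg _)]

theorem Nat.card_divisors_le_mul_rpow {δ : ℝ} (hδ : 0 < δ) :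
    ∃ K : ℝ, 0 ≤ K ∧ ∀ n : ℕ, n ≠ 0 → (#n.divisors : ℝ) ≤ K * (n : ℝ) ^ δ := by
  set K₀ : ℝ := 1 + (δ * Real.log 2)⁻¹
  have hK₀ : 1 ≤ K₀ := le_add_of_nonneg_right (by have := Real.log_pos one_lt_two; positivity)
  set B : ℕ := ⌈(2 : ℝ) ^ δ⁻¹⌉₊
  have hfactor : ∀ p : ℕ, p.Prime → ∀ a : ℕ,
      (a + 1 : ℝ) ≤ (if p ≤ B then K₀ else 1) * (p : ℝ) ^ (a * δ) := by
    intro p hp a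
    split_ifs with hpB
    · exact add_one_le_mul_rpow_mul (mod_cast hp.two_le) hδ a
    · have h2 : (2 : ℝ) ≤ (p : ℝ) ^ δ := by
        have hp' : (2 : ℝ) ^ δ⁻¹ ≤ p := (Nat.le_ceil _).trans (by exact_mod_cast (not_le.1 hpB).le)
        calc (2 : ℝ) = ((2 : ℝ) ^ δ⁻¹) ^ δ := by
              rw [← rpow_mul zero_le_two, inv_mul_cancel₀ hδ.ne', rpow_one]
          _ ≤ (p : ℝ) ^ δ := by gcongr
      rw [one_mul]
      exact add_one_le_rpow_mul (Nat.cast_nonneg p) h2 a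
  refine ⟨K₀ ^ (B + 1), by positivity, fun n hn => ?_⟩
  have hconst : ∏ p ∈ n.primeFactors, (if p ≤ B then K₀ else 1) ≤ K₀ ^ (B + 1) := by
    rw [prod_ite, prod_const, prod_const_one, mul_one]
    refine pow_le_pow_right₀ hK₀ ((card_le_card fun p hp => ?_).trans (card_range _).le)
    exact mem_range.2 (Nat.lt_succ_of_le (mem_filter.1 hp).2)
  calc (#n.divisors : ℝ) = ∏ p ∈ n.primeFactors, ((n.factorization p : ℝ) + 1) := by
        rw [Nat.card_divisors hn]; push_cast; rfl
    _ ≤ ∏ p ∈ n.primeFactors, ((if p ≤ B then K₀ else 1) * (p : ℝ) ^ (n.factorization p * δ)) :=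
        prod_le_prod (fun _ _ => by positivity) fun p hp =>
          hfactor p (Nat.prime_of_mem_primeFactors hp) _
    _ ≤ K₀ ^ (B + 1) * (n : ℝ) ^ δ := by
        rw [prod_mul_distrib, Nat.rpow_eq_prod_primeFactors hn]
        gcongr

theorem card_divisors_mul_le_of_le_mul_rpow {K δ : ℝ} (hK0 : 0 ≤ K)
    (hK : ∀ n : ℕ, n ≠ 0 → (#n.divisors : ℝ) ≤ K * (n : ℝ) ^ δ) {β : ℝ} (hβ : 0 ≤ β) (σ : ℝ)
    (n : ℕ) : #n.divisors * (β * (n : ℝ) ^ (-σ)) ≤ K * (β * (n : ℝ) ^ (δ - σ)) := by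
  rcases eq_or_ne n 0 with rfl | hn
  · simp only [Nat.divisors_zero, card_empty, Nat.cast_zero, zero_mul]
    positivity
  calc #n.divisors * (β * (n : ℝ) ^ (-σ)) ≤ K * (n : ℝ) ^ δ * (β * (n : ℝ) ^ (-σ)) := by
        gcongr; exact hK n hn
    _ = K * (β * (n : ℝ) ^ (δ - σ)) := by
        rw [sub_eq_add_neg, rpow_add (by positivity)]; ring

theorem sum_range_mul_le_mul_sum_range_of_antitone {b w : ℕ → ℝ} {C : ℝ}
    (hb : ∀ n, ∑ i ∈ range n, b i ≤ C * n) (hw : Antitone w) (hw0 : ∀ n, 0 ≤ w n) (N : ℕ) :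
    ∑ i ∈ range N, b i * w i ≤ C * ∑ i ∈ range N, w i := by
  -- summation by parts, keeping the nonnegative defect `C n - ∑_{i<n} b i` weighted by `w n`
  have key : ∀ n, ∑ i ∈ range n, b i * w i + (C * n - ∑ i ∈ range n, b i) * w n ≤
      C * ∑ i ∈ range n, w i := by
    intro n
    induction n with
    | zero => simp
    | succ n ih =>
      have hdefect : (C * (n + 1 : ℕ) - ∑ i ∈ range (n + 1), b i) * w (n + 1) ≤
          (C * (n + 1 : ℕ) - ∑ i ∈ range (n + 1), b i) * w n :=
        mul_le_mul_of_nonneg_left (hw n.le_succ) (sub_nonneg.2 (hb _))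
      simp only [sum_range_succ, Nat.cast_succ] at hdefect ⊢
      nlinarith
  linarith [key N, mul_nonneg (sub_nonneg.2 (hb N)) (hw0 N)]

theorem summable_mul_rpow_neg_and_tsum_le {b : ℕ → ℝ} (hb0 : ∀ n, 0 ≤ b n) {C s : ℝ}
    (hs : 1 < s) (hb : ∀ N : ℕ, ∑ n ∈ range N, b (n + 1) ≤ C * N) :
    Summable (fun n : ℕ => b n * (n : ℝ) ^ (-s)) ∧
      ∑' n : ℕ, b n * (n : ℝ) ^ (-s) ≤ C * ∑' n : ℕ, (n : ℝ) ^ (-s) := by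
  have hC : 0 ≤ C := (hb0 1).trans (by simpa using hb 1)
  have hzeta : Summable (fun n : ℕ => (n : ℝ) ^ (-s)) := Real.summable_nat_rpow.2 (by linarith)
  have hterm0 : ∀ n, 0 ≤ b n * (n : ℝ) ^ (-s) := fun n => mul_nonneg (hb0 n) (by positivity)
  have hpartial : ∀ N, ∑ n ∈ range N, b n * (n : ℝ) ^ (-s) ≤ C * ∑' n : ℕ, (n : ℝ) ^ (-s) := by
    intro N
    have hw : Antitone fun n : ℕ => ((n + 1 : ℕ) : ℝ) ^ (-s) := fun m n hmn =>
      rpow_le_rpow_of_nonpos (by positivity) (by gcongr) (by linarith)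
    calc ∑ n ∈ range N, b n * (n : ℝ) ^ (-s)
        ≤ ∑ n ∈ range (N + 1), b n * (n : ℝ) ^ (-s) := by
          rw [sum_range_succ]; linarith [hterm0 N]
      _ = ∑ n ∈ range N, b (n + 1) * ((n + 1 : ℕ) : ℝ) ^ (-s) := by
          rw [sum_range_succ', Nat.cast_zero, zero_rpow (by linarith), mul_zero, add_zero]
      _ ≤ C * ∑ n ∈ range N, ((n + 1 : ℕ) : ℝ) ^ (-s) :=
          sum_range_mul_le_mul_sum_range_of_antitone hb hw (fun n => by positivity) N
      _ = C * ∑ n ∈ range (N + 1), (n : ℝ) ^ (-s) := by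
          rw [sum_range_succ' (fun n : ℕ => (n : ℝ) ^ (-s)), Nat.cast_zero, zero_rpow (by linarith),
            add_zero]
      _ ≤ C * ∑' n : ℕ, (n : ℝ) ^ (-s) := by
          gcongr
          exact hzeta.sum_le_tsum _ fun n _ => by positivity
  exact ⟨summable_of_sum_range_le hterm0 hpartial, Real.tsum_le_of_sum_range_le hterm0 hpartial⟩

theorem sum_mul_succ_mul_succ_le_sum_card_divisors_mul {c : ℕ} (hc : c ≠ 0) {g : ℕ → ℝ}
    (hg : ∀ n, 0 ≤ g n) (S : Finset (ℕ × ℕ)) :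
    ∑ p ∈ S, g (c * (p.1 + 1) * (p.2 + 1)) ≤
      ∑ n ∈ S.image (fun p => c * (p.1 + 1) * (p.2 + 1)), #n.divisors * g n := by
  rw [sum_comp]
  gcongr with n hn
  rw [nsmul_eq_mul]
  gcongr
  · exact hg n
  obtain ⟨p₀, -, rfl⟩ := mem_image.1 hn
  -- a pair in the fibre over `n` is determined by the divisor `p.1 + 1` of `n`
  refine card_le_card_of_injOn (fun p => p.1 + 1) (fun p hp => ?_) fun p hp p' hp' hpp' => ?_
  · rw [mem_coe, mem_filter] at hp
    exact Nat.mem_divisors.2 ⟨⟨c * (p.2 + 1), by rw [← hp.2]; ring⟩, by positivity⟩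
  · simp only [coe_filter, Set.mem_ofPred_eq] at hp hp'
    have h1 : p.1 = p'.1 := by simpa using hpp'
    have h2 : p.2 = p'.2 := by
      have := hp.2.trans hp'.2.symm
      rw [h1] at this
      simpa using Nat.eq_of_mul_eq_mul_left (by positivity) this
    exact Prod.ext h1 h2

theorem sum_range_norm_comp_mul_le {E : Type*} [SeminormedAddCommGroup E] {ρ : ℤ → E} {C : ℝ}
    (hρ : ∀ X : ℝ, 1 ≤ X → ∑ n ∈ (Icc (-⌊X⌋) ⌊X⌋).erase 0, ‖ρ n‖ ≤ C * X)
    {ε₁ : ℤ} (hε₁ : ε₁ = 1 ∨ ε₁ = -1) (N : ℕ) :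
    ∑ n ∈ range N, ‖ρ (ε₁ * ((n + 1 : ℕ) : ℤ))‖ ≤ C * N := by
  rcases N.eq_zero_or_pos with rfl | hN
  · simp
  have hε₁0 : ε₁ ≠ 0 := by rintro rfl; simp at hε₁
  have hinj : Set.InjOn (fun n : ℕ => ε₁ * ((n + 1 : ℕ) : ℤ)) (range N) := fun m _ n _ hmn => by
    simpa using mul_left_cancel₀ hε₁0 hmn
  have hsub : (range N).image (fun n : ℕ => ε₁ * ((n + 1 : ℕ) : ℤ)) ⊆
      (Icc (-⌊(N : ℝ)⌋) ⌊(N : ℝ)⌋).erase 0 := by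
    intro k hk
    obtain ⟨n, hn, rfl⟩ := mem_image.1 hk
    rw [mem_range] at hn
    rw [Int.floor_natCast, mem_erase, mem_Icc]
    rcases hε₁ with rfl | rfl <;> omega
  calc ∑ n ∈ range N, ‖ρ (ε₁ * ((n + 1 : ℕ) : ℤ))‖
      = ∑ k ∈ (range N).image (fun n : ℕ => ε₁ * ((n + 1 : ℕ) : ℤ)), ‖ρ k‖ :=
        (sum_image (f := fun k => ‖ρ k‖) hinj).symm
    _ ≤ ∑ k ∈ (Icc (-⌊(N : ℝ)⌋) ⌊(N : ℝ)⌋).erase 0, ‖ρ k‖ :=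
      sum_le_sum_of_subset_of_nonneg hsub fun _ _ _ => norm_nonneg _
    _ ≤ C * N := hρ N (mod_cast hN)

theorem norm_natCast_cpow_neg_mul_natCast_cpow_neg_le {u v : ℕ} (hu : u ≠ 0) (hv : v ≠ 0)
    {s t : ℂ} {σ : ℝ} (hs : σ ≤ s.re) (ht : σ ≤ t.re) :
    ‖(u : ℂ) ^ (-s) * (v : ℂ) ^ (-t)‖ ≤ ((u * v : ℕ) : ℝ) ^ (-σ) := by
  rw [norm_mul, Complex.norm_natCast_cpow_of_pos (Nat.pos_of_ne_zero hu),
    Complex.norm_natCast_cpow_of_pos (Nat.pos_of_ne_zero hv), Nat.cast_mul,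
    mul_rpow (Nat.cast_nonneg _) (Nat.cast_nonneg _), Complex.neg_re, Complex.neg_re]
  gcongr
  · exact Nat.one_le_cast.2 (Nat.one_le_iff_ne_zero.2 hu)
  · exact Nat.one_le_cast.2 (Nat.one_le_iff_ne_zero.2 hv)

theorem norm_summand_le (ρ : ℤ → ℂ) (ε₁ : ℤ) {q : ℕ} (hq : 1 ≤ q) {x : ℂ} {ε : ℝ} (hε : 0 ≤ ε)
    (hx : ε ≤ x.re) (ℓ m : ℕ) :
    ‖ρ (ε₁ * 3 * ((ℓ : ℤ) + 1) * ((m : ℤ) + 1) * q) * ((ℓ : ℂ) + 1) ^ (-(1 + x)) *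
        ((3 * (m + 1) * q : ℕ) : ℂ) ^ (-(1 + 3 * x))‖ ≤
      ‖ρ (ε₁ * ((3 * q * (ℓ + 1) * (m + 1) : ℕ) : ℤ))‖ *
        ((3 * q * (ℓ + 1) * (m + 1) : ℕ) : ℝ) ^ (-(1 + ε)) := by
  have hf : 3 * q * (ℓ + 1) * (m + 1) = (ℓ + 1) * (3 * (m + 1) * q) := by ring
  have harg : ε₁ * 3 * ((ℓ : ℤ) + 1) * ((m : ℤ) + 1) * q =
      ε₁ * ((3 * q * (ℓ + 1) * (m + 1) : ℕ) : ℤ) := by push_cast; ring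
  rw [harg, hf, mul_assoc, norm_mul, ← Nat.cast_succ]
  gcongr
  exact norm_natCast_cpow_neg_mul_natCast_cpow_neg_le (by positivity) (by positivity)
    (by simp; linarith) (by simp; linarith)

theorem dirichlet_series_bound_general (C : ℝ) (ε : ℝ) (hε : 0 < ε) :
    ∃ C' : ℝ, ∀ ρ : ℤ → ℂ,
      (∀ X : ℝ, 1 ≤ X → ∑ n ∈ (Finset.Icc (-⌊X⌋) ⌊X⌋).erase 0, ‖ρ n‖ ≤ C * X) →
      ∀ ε₁ : ℤ, (ε₁ = 1 ∨ ε₁ = -1) → ∀ q : ℕ, 1 ≤ q → ∀ x : ℂ, ε ≤ x.re →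
        Summable (fun lm : ℕ × ℕ =>
          ‖ρ (ε₁ * 3 * ((lm.1 : ℤ) + 1) * ((lm.2 : ℤ) + 1) * (q : ℤ)) *
            (((lm.1 : ℕ) + 1 : ℂ)) ^ (-(1 + x)) *
            (((3 * (lm.2 + 1) * q : ℕ) : ℂ)) ^ (-(1 + 3 * x))‖) ∧
        ‖∑' lm : ℕ × ℕ,
          ρ (ε₁ * 3 * ((lm.1 : ℤ) + 1) * ((lm.2 : ℤ) + 1) * (q : ℤ)) *
            (((lm.1 : ℕ) + 1 : ℂ)) ^ (-(1 + x)) *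
            (((3 * (lm.2 + 1) * q : ℕ) : ℂ)) ^ (-(1 + 3 * x))‖ ≤ C' := by
  obtain ⟨K, hK0, hK⟩ := Nat.card_divisors_le_mul_rpow (half_pos hε)
  set ζ := ∑' n : ℕ, (n : ℝ) ^ (-(1 + ε / 2))
  refine ⟨K * (C * ζ), fun ρ hρ ε₁ hε₁ q hq x hx => ?_⟩
  set T : ℕ × ℕ → ℂ := fun lm => ρ (ε₁ * 3 * ((lm.1 : ℤ) + 1) * ((lm.2 : ℤ) + 1) * (q : ℤ)) *
    (((lm.1 : ℕ) + 1 : ℂ)) ^ (-(1 + x)) * (((3 * (lm.2 + 1) * q : ℕ) : ℂ)) ^ (-(1 + 3 * x))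
  set b : ℕ → ℝ := fun n => ‖ρ (ε₁ * n)‖
  set g : ℕ → ℝ := fun n => b n * (n : ℝ) ^ (-(1 + ε))
  obtain ⟨hb_summable, hb_tsum⟩ := summable_mul_rpow_neg_and_tsum_le (b := b) (s := 1 + ε / 2)
    (fun n => norm_nonneg _) (by linarith) (sum_range_norm_comp_mul_le hρ hε₁)
  have hexp : ε / 2 - (1 + ε) = -(1 + ε / 2) := by ring
  set f : ℕ × ℕ → ℕ := fun p => 3 * q * (p.1 + 1) * (p.2 + 1)
  have hfinite : ∀ S : Finset (ℕ × ℕ), ∑ p ∈ S, ‖T p‖ ≤ K * (C * ζ) := fun S => calc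
    ∑ p ∈ S, ‖T p‖ ≤ ∑ p ∈ S, g (f p) :=
        sum_le_sum fun p _ => norm_summand_le ρ ε₁ hq hε.le hx p.1 p.2
    _ ≤ ∑ n ∈ S.image f, #n.divisors * g n :=
        sum_mul_succ_mul_succ_le_sum_card_divisors_mul (by positivity) (fun n => by positivity) S
    _ ≤ K * ∑ n ∈ S.image f, b n * (n : ℝ) ^ (-(1 + ε / 2)) := by
        rw [mul_sum, ← hexp]
        exact sum_le_sum fun n _ => card_divisors_mul_le_of_le_mul_rpow hK0 hK (norm_nonneg _) _ n
    _ ≤ K * (C * ζ) := by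
        gcongr
        exact (hb_summable.sum_le_tsum _ fun n _ => by positivity).trans hb_tsum
  have hsummable : Summable fun p => ‖T p‖ := summable_of_sum_le (fun p => norm_nonneg _) hfinite
  exact ⟨hsummable, (norm_tsum_le_tsum_norm hsummable).trans (hsummable.tsum_le_of_sum_le hfinite)⟩

/-- If `ρ : ℤ∖{0} → ℂ` satisfies `∑_{0<|n|≤X} |ρ(n)| ≤ C·X` for all `X ≥ 1`, then for every
`ε > 0` there is `C′ = C′(C,ε)` such that for every sign `ε₁ = ±1`, every `q ≥ 1` and every
complex `x` with `Re x ≥ ε`, the double series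
`∑_{ℓ,m ≥ 1} ρ(ε₁·3ℓmq) ℓ^{-(1+x)} (3mq)^{-(1+3x)}` converges absolutely with
`|sum| ≤ C′`. -/
theorem dirichlet_series_bound (C : ℝ) (hC : 0 < C) (ε : ℝ) (hε : 0 < ε) :
    ∃ C' : ℝ, ∀ ρ : ℤ → ℂ,
      (∀ X : ℝ, 1 ≤ X → ∑ n ∈ (Finset.Icc (-⌊X⌋) ⌊X⌋).erase 0, ‖ρ n‖ ≤ C * X) →
      ∀ ε₁ : ℤ, (ε₁ = 1 ∨ ε₁ = -1) → ∀ q : ℕ, 1 ≤ q → ∀ x : ℂ, ε ≤ x.re →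
        Summable (fun lm : ℕ × ℕ =>
          ‖ρ (ε₁ * 3 * ((lm.1 : ℤ) + 1) * ((lm.2 : ℤ) + 1) * (q : ℤ)) *
            (((lm.1 : ℕ) + 1 : ℂ)) ^ (-(1 + x)) *
            (((3 * (lm.2 + 1) * q : ℕ) : ℂ)) ^ (-(1 + 3 * x))‖) ∧
        ‖∑' lm : ℕ × ℕ,
          ρ (ε₁ * 3 * ((lm.1 : ℤ) + 1) * ((lm.2 : ℤ) + 1) * (q : ℤ)) *
            (((lm.1 : ℕ) + 1 : ℂ)) ^ (-(1 + x)) *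
            (((3 * (lm.2 + 1) * q : ℕ) : ℂ)) ^ (-(1 + 3 * x))‖ ≤ C' :=
  dirichlet_series_bound_general C ε hε
end

section
/- For every ε with 0 < ε < 1/2 there exists a constant C = C(ε) such that for every complex number w with ε ≤ Re(w) ≤ 1 − ε and each sign s ∈ {+1,−1}: |Γ(1−w) · (cos(π(1−w)/2) + i·s·sin(π(1−w)/2))| ≤ C · |w|^{1/2 − Re(w)}, where Γ is the complex Gamma function. -/
/-!
Put `F z = Γ(z) z^(1/2 - z)` (`stirlingQuotient`), so that
`|F z| = |Γ z| |z|^(1/2 - Re z) e^(Im z · arg z)`.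
On the line `Re z = 1/2` the reflection formula gives `|Γ z|² = π / cosh(π Im z)`, and
`Γ(z) = (z - 1) Γ(z - 1)` carries this to `Re z = 3/2`; on both lines `|F| ≤ √(2π)`.
Inside the strip `|Γ z| ≤ Γ(Re z)` is bounded, so `F` grows at most like `e^(π|Im z|/2)` and
Phragmén–Lindelöf bounds `|F|` by `√(2π)` on the whole strip. Since
`Im z · arg z ≥ π|Im z|/2 - Re z` for `Re z ≥ 0`, this is the Stirling-type bound
`|Γ z| ≲ |z|^(Re z - 1/2) e^(-π|Im z|/2)`, extended to `ε ≤ Re z` by one more use of the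
recurrence. The trigonometric factor equals `e^(±iπ(1-w)/2)`, of modulus at most
`e^(π|Im w|/2)`, which cancels the exponential decay; finally `|1 - w|` and `|w|` are
comparable up to the factor `1 + 1/ε` because both have real part at least `ε`.
-/

open Complex Set Filter
open scoped Real ComplexConjugate

lemma rpow_le_mul_rpow_of_le_mul {x y K a : ℝ} (hx : 0 ≤ x) (hy : 0 ≤ y) (hK : 1 ≤ K)
    (hxy : x ≤ K * y) (ha₀ : 0 ≤ a) (ha₁ : a ≤ 1) : x ^ a ≤ K * y ^ a :=
  calc x ^ a ≤ (K * y) ^ a := Real.rpow_le_rpow hx hxy ha₀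
    _ = K ^ a * y ^ a := Real.mul_rpow (by linarith) hy
    _ ≤ K * y ^ a := by
      gcongr
      simpa using Real.rpow_le_rpow_of_exponent_le hK ha₁

lemma rpow_le_mul_rpow_of_abs_le_one {x y K a : ℝ} (hx : 0 < x) (hy : 0 < y) (hK : 1 ≤ K)
    (hxy : x ≤ K * y) (hyx : y ≤ K * x) (ha : |a| ≤ 1) : x ^ a ≤ K * y ^ a := by
  obtain ⟨ha₁, ha₂⟩ := abs_le.1 ha
  rcases le_total 0 a with ha₀ | ha₀
  · exact rpow_le_mul_rpow_of_le_mul hx.le hy.le hK hxy ha₀ ha₂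
  · have hinv : x⁻¹ ≤ K * y⁻¹ := by
      rw [← div_eq_mul_inv, le_div_iff₀ hy, ← div_eq_inv_mul, div_le_iff₀ hx]
      linarith
    have := rpow_le_mul_rpow_of_le_mul (inv_nonneg.2 hx.le) (inv_nonneg.2 hy.le) hK hinv
      (neg_nonneg.2 ha₀) (by linarith)
    rwa [Real.inv_rpow hx.le, Real.inv_rpow hy.le, ← Real.rpow_neg hx.le, ← Real.rpow_neg hy.le,
      neg_neg] at this

lemma sin_mul_pi_div_two_sub_le_cos {α : ℝ} (h₀ : 0 ≤ α) (h₁ : α ≤ π / 2) :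
    (π / 2 - α) * Real.sin α ≤ Real.cos α := by
  rcases h₀.eq_or_lt with rfl | h₀
  · simp
  have h := Real.le_tan (x := π / 2 - α) (by linarith) (by linarith)
  rw [Real.tan_eq_sin_div_cos, Real.sin_pi_div_two_sub, Real.cos_pi_div_two_sub,
    le_div_iff₀ (Real.sin_pos_of_pos_of_lt_pi h₀ (by linarith))] at h
  exact h

lemma norm_one_sub_le {R : Type*} [SeminormedRing R] [NormOneClass R] {ε : ℝ} (hε : 0 < ε)
    {z : R} (hz : ε ≤ ‖z‖) : ‖1 - z‖ ≤ (1 + 1 / ε) * ‖z‖ :=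
  calc ‖1 - z‖ ≤ 1 + ‖z‖ := by simpa using norm_sub_le (1 : R) z
    _ ≤ ‖z‖ / ε + ‖z‖ := by gcongr; rwa [le_div_iff₀ hε, one_mul]
    _ = (1 + 1 / ε) * ‖z‖ := by ring

lemma im_mul_arg_eq_abs_mul_abs (z : ℂ) : z.im * arg z = |z.im| * |arg z| := by
  rcases lt_or_ge z.im 0 with h | h
  · rw [abs_of_neg h, abs_of_neg (arg_neg_iff.2 h), neg_mul_neg]
  · rw [abs_of_nonneg h, abs_of_nonneg (arg_nonneg_iff.2 h)]

lemma abs_im_eq_norm_mul_sin_abs_arg (z : ℂ) : |z.im| = ‖z‖ * Real.sin |arg z| := by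
  rcases lt_or_ge z.im 0 with h | h
  · rw [abs_of_neg h, abs_of_neg (arg_neg_iff.2 h), Real.sin_neg, mul_neg, norm_mul_sin_arg]
  · rw [abs_of_nonneg h, abs_of_nonneg (arg_nonneg_iff.2 h), norm_mul_sin_arg]

lemma im_mul_arg_le {z : ℂ} (hz : 0 ≤ z.re) : z.im * arg z ≤ π / 2 * |z.im| := by
  rw [im_mul_arg_eq_abs_mul_abs, mul_comm (π / 2)]
  exact mul_le_mul_of_nonneg_left (abs_arg_le_pi_div_two_iff.2 hz) (abs_nonneg _)

lemma pi_div_two_mul_abs_im_sub_re_le {z : ℂ} (hz : 0 ≤ z.re) :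
    π / 2 * |z.im| - z.re ≤ z.im * arg z := by
  have key := sin_mul_pi_div_two_sub_le_cos (abs_nonneg (arg z))
    (abs_arg_le_pi_div_two_iff.2 hz)
  rw [im_mul_arg_eq_abs_mul_abs, abs_im_eq_norm_mul_sin_abs_arg, ← norm_mul_cos_arg,
    ← Real.cos_abs]
  nlinarith [norm_nonneg z]

lemma norm_cos_add_I_mul_sign_mul_sin_le {s : ℝ} (hs : s = 1 ∨ s = -1) (z : ℂ) :
    ‖cos z + I * s * sin z‖ ≤ Real.exp |z.im| := by
  have hexp : cos z + I * s * sin z = exp (s * z * I) := by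
    rw [exp_mul_I]
    rcases hs with rfl | rfl <;> push_cast <;>
      simp only [one_mul, neg_one_mul, cos_neg, sin_neg] <;> ring
  have hs' : |s| = 1 := by rcases hs with rfl | rfl <;> simp
  rw [hexp, norm_exp]
  gcongr
  calc (s * z * I).re = -(s * z.im) := by simp
    _ ≤ |s * z.im| := neg_le_abs _
    _ = |z.im| := by rw [abs_mul, hs', one_mul]

lemma norm_Gamma_le_Gamma_re {z : ℂ} (hz : 0 < z.re) : ‖Gamma z‖ ≤ Real.Gamma z.re := by
  rw [Gamma_eq_integral hz, Real.Gamma_eq_integral hz, GammaIntegral]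
  refine (MeasureTheory.norm_integral_le_integral_norm _).trans_eq
    (MeasureTheory.setIntegral_congr_fun measurableSet_Ioi fun t (ht : 0 < t) ↦ ?_)
  rw [norm_mul, norm_cpow_eq_rpow_re_of_pos ht, norm_real, Real.norm_of_nonneg (Real.exp_pos _).le]
  simp

lemma norm_Gamma_sq_of_re_eq_half {z : ℂ} (hz : z.re = 1 / 2) :
    ‖Gamma z‖ ^ 2 = π / Real.cosh (π * z.im) := by
  have hconj : 1 - z = conj z := Complex.ext (by simp [hz]; norm_num) (by simp)
  have hsin : sin (π * z) = Real.cosh (π * z.im) := by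
    have hz' : (π : ℂ) * z = π / 2 + (π * z.im : ℝ) * I :=
      Complex.ext (by simp [hz]; ring) (by simp)
    rw [hz', sin_add_mul_I, sin_pi_div_two, cos_pi_div_two, ← ofReal_cosh]
    ring
  have h := Gamma_mul_Gamma_one_sub z
  rw [hconj, Gamma_conj, mul_conj, hsin, ← ofReal_div, ofReal_inj] at h
  rw [Complex.sq_norm, h]

lemma norm_Gamma_mul_exp_le_of_re_eq_half {z : ℂ} (hz : z.re = 1 / 2) :
    ‖Gamma z‖ * Real.exp (π / 2 * |z.im|) ≤ √(2 * π) := by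
  have hcosh : Real.exp (π * |z.im|) ≤ 2 * Real.cosh (π * z.im) := by
    rw [← Real.cosh_abs, abs_mul, abs_of_pos Real.pi_pos, Real.cosh_eq]
    linarith [Real.exp_pos (-(π * |z.im|))]
  rw [Real.le_sqrt (by positivity) (by positivity), mul_pow, norm_Gamma_sq_of_re_eq_half hz,
    ← Real.exp_nat_mul, div_mul_eq_mul_div, div_le_iff₀ (Real.cosh_pos _)]
  push_cast
  rw [show 2 * (π / 2 * |z.im|) = π * |z.im| by ring]
  nlinarith [Real.pi_pos]

noncomputable def stirlingQuotient (z : ℂ) : ℂ := Gamma z * z ^ (1 / 2 - z)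

lemma norm_stirlingQuotient {z : ℂ} (hz : z ≠ 0) :
    ‖stirlingQuotient z‖ = ‖Gamma z‖ * ‖z‖ ^ (1 / 2 - z.re) * Real.exp (z.im * arg z) := by
  rw [stirlingQuotient, norm_mul, norm_cpow_of_ne_zero hz, div_eq_mul_inv, ← Real.exp_neg]
  simp [mul_assoc, mul_comm]

lemma norm_stirlingQuotient_le_of_re_eq_half {z : ℂ} (hz : z.re = 1 / 2) :
    ‖stirlingQuotient z‖ ≤ √(2 * π) := by
  have hz₀ : z ≠ 0 := fun h ↦ by simp [h] at hz
  rw [norm_stirlingQuotient hz₀, hz, sub_self, Real.rpow_zero, mul_one]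
  refine le_trans ?_ (norm_Gamma_mul_exp_le_of_re_eq_half hz)
  exact mul_le_mul_of_nonneg_left (Real.exp_le_exp.2 (im_mul_arg_le (by rw [hz]; norm_num)))
    (norm_nonneg _)

lemma norm_stirlingQuotient_le_of_re_eq_three_halves {z : ℂ} (hz : z.re = 3 / 2) :
    ‖stirlingQuotient z‖ ≤ √(2 * π) := by
  have hz₀ : z ≠ 0 := fun h ↦ by norm_num [h] at hz
  have hz₁ : z - 1 ≠ 0 := sub_ne_zero.2 fun h ↦ by norm_num [h] at hz
  have hre : (z - 1).re = 1 / 2 := by simp [hz]; norm_num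
  have hnorm : ‖z - 1‖ ≤ ‖z‖ := by
    rw [← sq_le_sq₀ (norm_nonneg _) (norm_nonneg _), Complex.sq_norm, Complex.sq_norm,
      normSq_apply, normSq_apply]
    simp [hz]; norm_num
  have hΓ : Gamma z = (z - 1) * Gamma (z - 1) := by
    simpa using Gamma_add_one (z - 1) hz₁
  rw [norm_stirlingQuotient hz₀, hΓ, norm_mul, hz, show (1 / 2 - 3 / 2 : ℝ) = -1 by norm_num,
    Real.rpow_neg_one]
  calc ‖z - 1‖ * ‖Gamma (z - 1)‖ * ‖z‖⁻¹ * Real.exp (z.im * arg z)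
      = ‖z - 1‖ / ‖z‖ * (‖Gamma (z - 1)‖ * Real.exp (z.im * arg z)) := by ring
    _ ≤ 1 * (‖Gamma (z - 1)‖ * Real.exp (π / 2 * |(z - 1).im|)) := by
      gcongr ?_ * (_ * Real.exp ?_)
      · exact div_le_one_of_le₀ hnorm (norm_nonneg _)
      · simpa using im_mul_arg_le (z := z) (by rw [hz]; norm_num)
    _ ≤ √(2 * π) := by rw [one_mul]; exact norm_Gamma_mul_exp_le_of_re_eq_half hre

lemma differentiableAt_stirlingQuotient {z : ℂ} (hz : 0 < z.re) :
    DifferentiableAt ℂ stirlingQuotient z := by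
  have hΓ : DifferentiableAt ℂ Gamma z := differentiableAt_Gamma z fun m h ↦ by
    rw [h] at hz; simp at hz; linarith [m.cast_nonneg (α := ℝ)]
  exact hΓ.mul (differentiableAt_id.cpow ((differentiableAt_const _).sub differentiableAt_id)
    (Or.inl hz))

lemma norm_stirlingQuotient_le_mul_exp {z : ℂ} (h₁ : 1 / 2 ≤ z.re) (h₂ : z.re ≤ 3 / 2) :
    ‖stirlingQuotient z‖ ≤
      2 * max (Real.Gamma (1 / 2)) (Real.Gamma (3 / 2)) * Real.exp (π / 2 * |z.im|) := by
  have hre : 0 < z.re := by linarith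
  have hnorm : 1 / 2 ≤ ‖z‖ := h₁.trans (re_le_norm z)
  have hΓ : ‖Gamma z‖ ≤ max (Real.Gamma (1 / 2)) (Real.Gamma (3 / 2)) :=
    (norm_Gamma_le_Gamma_re hre).trans <| Real.convexOn_Gamma.le_on_segment
      (by norm_num) (by norm_num) (by rw [segment_eq_Icc (by norm_num)]; exact ⟨h₁, h₂⟩)
  have hpow : ‖z‖ ^ (1 / 2 - z.re) ≤ 2 := by
    rw [show 1 / 2 - z.re = -(z.re - 1 / 2) by ring, Real.rpow_neg (norm_nonneg _),
      inv_le_comm₀ (by positivity) two_pos]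
    calc 2⁻¹ = (1 / 2 : ℝ) ^ (1 : ℝ) := by norm_num
      _ ≤ (1 / 2 : ℝ) ^ (z.re - 1 / 2) :=
        Real.rpow_le_rpow_of_exponent_ge (by norm_num) (by norm_num) (by linarith)
      _ ≤ ‖z‖ ^ (z.re - 1 / 2) := Real.rpow_le_rpow (by norm_num) hnorm (by linarith)
  rw [norm_stirlingQuotient (ne_zero_of_re_pos hre)]
  refine (mul_le_mul (mul_le_mul hΓ hpow (by positivity) (by positivity))
    (Real.exp_le_exp.2 (im_mul_arg_le hre.le)) (by positivity) (by positivity)).trans_eq ?_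
  ring

lemma norm_stirlingQuotient_le {z : ℂ} (h₁ : 1 / 2 ≤ z.re) (h₂ : z.re ≤ 3 / 2) :
    ‖stirlingQuotient z‖ ≤ √(2 * π) := by
  have hdiff : DiffContOnCl ℂ stirlingQuotient (re ⁻¹' Ioo (1 / 2) (3 / 2)) := by
    refine DifferentiableOn.diffContOnCl fun w hw ↦
      (differentiableAt_stirlingQuotient ?_).differentiableWithinAt
    rw [closure_preimage_re, closure_Ioo (by norm_num)] at hw
    linarith [hw.1]
  have hgrowth : stirlingQuotient =O[comap (_root_.abs ∘ im) atTop ⊓ 𝓟 (re ⁻¹' Ioo (1 / 2) (3 / 2))]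
      fun z ↦ Real.exp (π / 2 * Real.exp (1 * |z.im|)) := by
    refine Asymptotics.IsBigO.of_bound (2 * max (Real.Gamma (1 / 2)) (Real.Gamma (3 / 2)))
      (eventually_inf_principal.2 (Eventually.of_forall fun w hw ↦ ?_))
    refine (norm_stirlingQuotient_le_mul_exp hw.1.le hw.2.le).trans ?_
    rw [Real.norm_of_nonneg (Real.exp_pos _).le, one_mul]
    gcongr
    linarith [Real.add_one_le_exp |w.im|]
  refine PhragmenLindelof.vertical_strip hdiff ⟨1, ?_, π / 2, hgrowth⟩
    (fun w hw ↦ norm_stirlingQuotient_le_of_re_eq_half hw)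
    (fun w hw ↦ norm_stirlingQuotient_le_of_re_eq_three_halves hw) h₁ h₂
  norm_num
  linarith [Real.pi_gt_three]

lemma norm_Gamma_mul_exp_le_on_strip {z : ℂ} (h₁ : 1 / 2 ≤ z.re) (h₂ : z.re ≤ 3 / 2) :
    ‖Gamma z‖ * Real.exp (π / 2 * |z.im|) ≤ √(2 * π) * ‖z‖ ^ (z.re - 1 / 2) * Real.exp z.re := by
  have hz₀ : z ≠ 0 := ne_zero_of_re_pos (by linarith)
  have hΓ : ‖Gamma z‖ * Real.exp (π / 2 * |z.im|) = ‖stirlingQuotient z‖ *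
      ‖z‖ ^ (z.re - 1 / 2) * Real.exp (π / 2 * |z.im| - z.im * arg z) := by
    rw [norm_stirlingQuotient hz₀, show 1 / 2 - z.re = -(z.re - 1 / 2) by ring,
      Real.rpow_neg (norm_nonneg _), Real.exp_sub]
    field_simp
  rw [hΓ]
  gcongr
  · exact norm_stirlingQuotient_le h₁ h₂
  · linarith [pi_div_two_mul_abs_im_sub_re_le (z := z) (by linarith)]

lemma norm_Gamma_mul_exp_le_of_re_mem_Icc {ε : ℝ} (hε : 0 < ε) {z : ℂ} (h₁ : ε ≤ z.re)
    (h₂ : z.re ≤ 3 / 2) :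
    ‖Gamma z‖ * Real.exp (π / 2 * |z.im|) ≤
      (1 + 1 / ε) * (√(2 * π) * Real.exp (3 / 2)) * ‖z‖ ^ (z.re - 1 / 2) := by
  have hK : 1 ≤ 1 + 1 / ε := by simp [hε.le]
  rcases le_or_gt (1 / 2) z.re with h | h
  · calc ‖Gamma z‖ * Real.exp (π / 2 * |z.im|)
        ≤ √(2 * π) * ‖z‖ ^ (z.re - 1 / 2) * Real.exp z.re := norm_Gamma_mul_exp_le_on_strip h h₂
      _ ≤ √(2 * π) * Real.exp (3 / 2) * ‖z‖ ^ (z.re - 1 / 2) := by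
        rw [mul_right_comm]; gcongr
      _ ≤ _ := mul_le_mul_of_nonneg_right (le_mul_of_one_le_left (by positivity) hK)
        (by positivity)
  · have hz₀ : z ≠ 0 := ne_zero_of_re_pos (by linarith)
    have hΓ : ‖Gamma z‖ = ‖Gamma (z + 1)‖ / ‖z‖ := by
      rw [Gamma_add_one z hz₀, norm_mul, mul_div_cancel_left₀ _ (norm_ne_zero_iff.2 hz₀)]
    have hnorm : ‖z + 1‖ ≤ (1 + 1 / ε) * ‖z‖ := by
      simpa [add_comm] using norm_one_sub_le hε (z := -z) (by simpa using h₁.trans (re_le_norm z))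
    have hshift : ‖z + 1‖ ^ (z.re + 1 / 2) ≤ (1 + 1 / ε) * ‖z‖ ^ (z.re + 1 / 2) :=
      rpow_le_mul_rpow_of_le_mul (norm_nonneg _) (norm_nonneg _) hK hnorm (by linarith)
        (by linarith)
    have hpow : ‖z‖ ^ (z.re + 1 / 2) / ‖z‖ = ‖z‖ ^ (z.re - 1 / 2) := by
      have := norm_ne_zero_iff.2 hz₀
      rw [show z.re + 1 / 2 = z.re - 1 / 2 + 1 by ring, Real.rpow_add_one this,
        mul_div_cancel_right₀ _ this]
    have h' := norm_Gamma_mul_exp_le_on_strip (z := z + 1) (by simp; linarith) (by simp; linarith)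
    rw [add_re, one_re, add_im, one_im, add_zero,
      show z.re + 1 - 1 / 2 = z.re + 1 / 2 by ring] at h'
    calc ‖Gamma z‖ * Real.exp (π / 2 * |z.im|)
        = ‖Gamma (z + 1)‖ * Real.exp (π / 2 * |z.im|) / ‖z‖ := by rw [hΓ, div_mul_eq_mul_div]
      _ ≤ √(2 * π) * ((1 + 1 / ε) * ‖z‖ ^ (z.re + 1 / 2)) * Real.exp (3 / 2) / ‖z‖ := by
        refine div_le_div_of_nonneg_right (h'.trans ?_) (norm_nonneg _)
        gcongr
        linarith
      _ = _ := by rw [← hpow]; ring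

theorem gamma_trig_bound_general (ε : ℝ) (hε : 0 < ε) :
    ∃ C : ℝ, 0 < C ∧ ∀ w : ℂ, ε ≤ w.re → w.re ≤ 1 - ε → ∀ s : ℝ, s = 1 ∨ s = -1 →
      ‖Complex.Gamma (1 - w) *
          (Complex.cos ((Real.pi : ℂ) * (1 - w) / 2) +
            Complex.I * (s : ℂ) * Complex.sin ((Real.pi : ℂ) * (1 - w) / 2))‖
        ≤ C * ‖w‖ ^ (1 / 2 - w.re) := by
  set K := 1 + 1 / ε
  set C₁ := K * (√(2 * π) * Real.exp (3 / 2))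
  refine ⟨C₁ * K, by positivity, fun w hw₁ hw₂ s hs ↦ ?_⟩
  have hw : ε ≤ ‖w‖ := hw₁.trans (re_le_norm w)
  have hw' : ε ≤ ‖1 - w‖ := (re_le_norm (1 - w)).trans' (by simp; linarith)
  have htrig := norm_cos_add_I_mul_sign_mul_sin_le hs ((π : ℂ) * (1 - w) / 2)
  have him : |((π : ℂ) * (1 - w) / 2).im| = π / 2 * |(1 - w).im| := by
    simp [abs_mul, abs_div, abs_of_pos Real.pi_pos]; ring
  have hcompare : ‖1 - w‖ ^ (1 / 2 - w.re) ≤ K * ‖w‖ ^ (1 / 2 - w.re) :=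
    rpow_le_mul_rpow_of_abs_le_one (hε.trans_le hw') (hε.trans_le hw) (by simp [K, hε.le])
      (norm_one_sub_le hε hw) (by simpa only [sub_sub_cancel] using norm_one_sub_le hε hw')
      (abs_le.2 ⟨by linarith, by linarith⟩)
  have hΓ := norm_Gamma_mul_exp_le_of_re_mem_Icc hε (z := 1 - w) (by simp; linarith)
    (by simp; linarith)
  rw [sub_re, one_re, show 1 - w.re - 1 / 2 = 1 / 2 - w.re by ring] at hΓ
  calc _ ≤ ‖Gamma (1 - w)‖ * Real.exp (π / 2 * |(1 - w).im|) := by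
        rw [norm_mul, ← him]; gcongr
    _ ≤ C₁ * ‖1 - w‖ ^ (1 / 2 - w.re) := hΓ
    _ ≤ C₁ * (K * ‖w‖ ^ (1 / 2 - w.re)) := by gcongr
    _ = C₁ * K * ‖w‖ ^ (1 / 2 - w.re) := (mul_assoc _ _ _).symm

/-- For `0 < ε < 1/2` there is `C = C(ε)` such that for all complex `w` with
`ε ≤ Re w ≤ 1 − ε` and each sign `s = ±1`,
`|Γ(1−w)(cos(π(1−w)/2) + i·s·sin(π(1−w)/2))| ≤ C |w|^{1/2 − Re w}`. -/
theorem gamma_trig_bound (ε : ℝ) (hε : 0 < ε) (hε' : ε < 1 / 2) :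
    ∃ C : ℝ, 0 < C ∧ ∀ w : ℂ, ε ≤ w.re → w.re ≤ 1 - ε → ∀ s : ℝ, s = 1 ∨ s = -1 →
      ‖Complex.Gamma (1 - w) *
          (Complex.cos ((Real.pi : ℂ) * (1 - w) / 2) +
            Complex.I * (s : ℂ) * Complex.sin ((Real.pi : ℂ) * (1 - w) / 2))‖
        ≤ C * ‖w‖ ^ (1 / 2 - w.re) :=
  gamma_trig_bound_general ε hε
end

section
/- Let f : ℝ⁴ → ℂ be a Schwartz function and for a sign ε ∈ {+1,−1} define Σ^ε(f, z₁, z₂) = ∫₀^∞ ∫₀^∞ f(0,0,t,εu) t^{z₁−1} u^{z₂−1} dt du. Then: (i) the double integral converges absolutely whenever Re(z₁) > 0 and Re(z₂) > 0, and Σ^ε(f, z₁, z₂) is holomorphic in each variable there; (ii) for all σ₁, σ₂ > 0 and all A₁, A₂ > 0 there is a constant C such that for all real t₁, t₂: |Σ^ε(f, σ₁ + it₁, σ₂ + it₂)| ≤ C · (1 + |t₁|)^{−A₁} · (1 + |t₂|)^{−A₂}; (iii) for every real t > 0, writing f^t(x) = f(t·x), one has Σ^ε(f^t, z₁, z₂)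 = t^{−z₁−z₂} · Σ^ε(f, z₁, z₂). -/
open MeasureTheory

/-- `Σ^ε(f, z₁, z₂) = ∫₀^∞ ∫₀^∞ f(0,0,t,εu) t^{z₁−1} u^{z₂−1} dt du`. -/
noncomputable def Sigma2 (f : (Fin 4 → ℝ) → ℂ) (e : ℝ) (z₁ z₂ : ℂ) : ℂ :=
  ∫ p in Set.Ioi (0 : ℝ) ×ˢ Set.Ioi (0 : ℝ),
    f ![0, 0, p.1, e * p.2] * (p.1 : ℂ) ^ (z₁ - 1) * (p.2 : ℂ) ^ (z₂ - 1)

/-!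
On the plane `(0, 0, t, εu)` the Schwartz function `f` restricts to a Schwartz function `g` of two
variables, and `Σ^ε(f, ·, ·)` is the double Mellin transform `M g` of `g` over the open quadrant.
Decay of `g` in each variable separately gives absolute convergence, and by Fubini `M g` is a
one-variable Mellin transform of a continuous, rapidly decaying function, hence holomorphic.
Integration by parts in `u`, whose boundary terms vanish, gives
`z₂ M g (z₁, z₂) = -M (∂ᵤ g) (z₁, z₂ + 1)`. Iterating, and swapping the variables for `z₁`,
`∏_{j<n} (z₁ + j) ∏_{j<m} (z₂ + j) M g` is the transform of another Schwartz function on shifted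
vertical lines, hence bounded there, while `‖∏_{j<n} (σ + iτ + j)‖` grows like `(1 + |τ|)ⁿ`.
The dilation law is the linear change of variables `p ↦ t • p`, which preserves the quadrant.
-/

open Set Filter Topology Asymptotics Complex
open scoped Pointwise SchwartzMap LineDeriv

section PolynomialDecay

variable {E : Type*} [NormedAddCommGroup E] {φ : ℝ → E} {C : ℝ} {k : ℕ}

lemma inv_one_add_norm_pow_le_one (x : ℝ) : ((1 + ‖x‖) ^ k)⁻¹ ≤ 1 :=
  inv_le_one_of_one_le₀ (one_le_pow₀ (le_add_of_nonneg_right (norm_nonneg x)))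

lemma isBigO_atTop_rpow_of_norm_le (h : ∀ x, ‖φ x‖ ≤ C * ((1 + ‖x‖) ^ k)⁻¹) :
    φ =O[atTop] (· ^ (-(k : ℝ))) := by
  have hC : 0 ≤ C := by simpa using (norm_nonneg _).trans (h 0)
  refine IsBigO.of_bound C ?_
  filter_upwards [eventually_gt_atTop 0] with x hx
  rw [Real.rpow_neg hx.le, Real.rpow_natCast, norm_inv, norm_pow, Real.norm_of_nonneg hx.le]
  refine (h x).trans (mul_le_mul_of_nonneg_left ?_ hC)
  gcongr
  rw [Real.norm_of_nonneg hx.le]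
  linarith

lemma isBigO_nhdsGT_zero_of_norm_le (h : ∀ x, ‖φ x‖ ≤ C * ((1 + ‖x‖) ^ k)⁻¹) :
    φ =O[𝓝[>] 0] (· ^ (-(0 : ℝ))) := by
  have hC : 0 ≤ C := by simpa using (norm_nonneg _).trans (h 0)
  refine IsBigO.of_bound C (Eventually.of_forall fun x => ?_)
  simpa using (h x).trans (mul_le_of_le_one_right hC (inv_one_add_norm_pow_le_one x))

lemma integrableOn_rpow_mul_inv_one_add_norm_pow {σ : ℝ} (hσ : 0 < σ) (hk : σ < k) :
    IntegrableOn (fun x : ℝ => x ^ (σ - 1) * ((1 + ‖x‖) ^ k)⁻¹) (Ioi 0) := by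
  have hw : ∀ x : ℝ, ‖((1 + ‖x‖) ^ k)⁻¹‖ ≤ 1 * ((1 + ‖x‖) ^ k)⁻¹ := fun x => by
    rw [one_mul, Real.norm_of_nonneg (by positivity)]
  have hc : Continuous fun x : ℝ => ((1 + ‖x‖) ^ k)⁻¹ :=
    Continuous.inv₀ (by fun_prop) fun x => by positivity
  exact mellin_convergent_of_isBigO_scalar (hc.locallyIntegrable.locallyIntegrableOn _)
    (isBigO_atTop_rpow_of_norm_le hw) hk (isBigO_nhdsGT_zero_of_norm_le hw) hσ

lemma mellin_differentiableAt_of_norm_le [NormedSpace ℂ E] (hφ : LocallyIntegrableOn φ (Ioi 0))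
    (h : ∀ x, ‖φ x‖ ≤ C * ((1 + ‖x‖) ^ k)⁻¹) {s : ℂ} (hs : 0 < s.re) (hk : s.re < k) :
    DifferentiableAt ℂ (mellin φ) s :=
  mellin_differentiableAt_of_isBigO_rpow hφ (isBigO_atTop_rpow_of_norm_le h) hk
    (isBigO_nhdsGT_zero_of_norm_le h) hs

end PolynomialDecay

lemma tendsto_mul_ofReal_cpow_of_isBigO {φ : ℝ → ℂ} {l : Filter ℝ} {c : ℝ} {s : ℂ}
    (hl : ∀ᶠ x in l, 0 < x) (hφ : φ =O[l] (· ^ c)) (hc : Tendsto (· ^ (s.re + c)) l (𝓝 0)) :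
    Tendsto (fun x => φ x * (x : ℂ) ^ s) l (𝓝 0) := by
  refine IsBigO.trans_tendsto ?_ hc
  obtain ⟨C, hC⟩ := hφ.bound
  refine IsBigO.of_bound C ?_
  filter_upwards [hC, hl] with x hφx hx
  rw [Real.norm_of_nonneg (by positivity)] at hφx
  rw [norm_mul, norm_cpow_eq_rpow_re_of_pos hx, Real.rpow_add hx,
    Real.norm_of_nonneg (by positivity)]
  calc ‖φ x‖ * x ^ s.re ≤ C * x ^ c * x ^ s.re := by gcongr
    _ = C * (x ^ s.re * x ^ c) := by ring

lemma hasDerivAt_ofReal_cpow_const_of_pos {x : ℝ} (hx : 0 < x) (s : ℂ) :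
    HasDerivAt (fun y : ℝ => (y : ℂ) ^ s) (s * (x : ℂ) ^ (s - 1)) x := by
  rcases eq_or_ne s 0 with rfl | hs
  · simpa using hasDerivAt_const x (1 : ℂ)
  · exact hasDerivAt_ofReal_cpow_const hx.ne' hs

theorem mellin_deriv_eq_neg_mul_mellin {φ φ' : ℝ → ℂ} {a b : ℝ} {s : ℂ}
    (hφ : ∀ x ∈ Ioi 0, HasDerivAt φ (φ' x) x) (hφ' : LocallyIntegrableOn φ' (Ioi 0))
    (h_top : φ =O[atTop] (· ^ (-a))) (h'_top : φ' =O[atTop] (· ^ (-a)))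
    (h_bot : φ =O[𝓝[>] 0] (· ^ (-b))) (h'_bot : φ' =O[𝓝[>] 0] (· ^ (-b)))
    (hs_top : s.re + 1 < a) (hs_bot : b < s.re) :
    mellin φ' (s + 1) = -(s * mellin φ s) := by
  have hφc : LocallyIntegrableOn φ (Ioi 0) :=
    ContinuousOn.locallyIntegrableOn (fun x hx => (hφ x hx).continuousAt.continuousWithinAt)
      measurableSet_Ioi
  have hconv : MellinConvergent φ s :=
    mellinConvergent_of_isBigO_rpow hφc h_top (by linarith) h_bot hs_bot
  have hconv' : MellinConvergent φ' (s + 1) :=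
    mellinConvergent_of_isBigO_rpow hφ' h'_top (by simpa using hs_top) h'_bot
      (by simp; linarith)
  have h_zero : Tendsto (fun x => φ x * (x : ℂ) ^ s) (𝓝[>] 0) (𝓝 0) := by
    refine tendsto_mul_ofReal_cpow_of_isBigO self_mem_nhdsWithin h_bot ?_
    have h := (Real.continuousAt_rpow_const 0 (s.re + -b) (Or.inr (by linarith))).tendsto
    rw [Real.zero_rpow (by linarith)] at h
    exact h.mono_left nhdsWithin_le_nhds
  have h_infty : Tendsto (fun x => φ x * (x : ℂ) ^ s) atTop (𝓝 0) := by
    refine tendsto_mul_ofReal_cpow_of_isBigO (eventually_gt_atTop 0) h_top ?_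
    simpa [neg_sub, sub_eq_add_neg] using tendsto_rpow_neg_atTop (by linarith : 0 < a - s.re)
  have h := integral_Ioi_mul_deriv_eq_deriv_mul hφ
    (fun x hx => hasDerivAt_ofReal_cpow_const_of_pos hx s)
    (IntegrableOn.congr_fun (Integrable.const_mul hconv s)
      (fun x _ => by simp only [smul_eq_mul, Pi.mul_apply]; ring) measurableSet_Ioi)
    (IntegrableOn.congr_fun hconv' (fun x _ => by simp [mul_comm]) measurableSet_Ioi)
    h_zero h_infty
  simp only [sub_zero, zero_sub] at h
  rw [mellin, mellin, ← integral_const_mul]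
  simp only [add_sub_cancel_right, smul_eq_mul]
  have e₁ : ∫ x in Ioi (0 : ℝ), (x : ℂ) ^ s * φ' x = ∫ x in Ioi (0 : ℝ), φ' x * (x : ℂ) ^ s := by
    congr 1 with x; ring
  have e₂ : ∫ x in Ioi (0 : ℝ), s * ((x : ℂ) ^ (s - 1) * φ x) =
      ∫ x in Ioi (0 : ℝ), φ x * (s * (x : ℂ) ^ (s - 1)) := by
    congr 1 with x; ring
  rw [e₁, e₂]
  linear_combination h

lemma one_add_abs_im_le_mul_norm_add_natCast {z : ℂ} (hz : 0 < z.re) (j : ℕ) :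
    1 + |z.im| ≤ (z.re⁻¹ + 1) * ‖z + j‖ := by
  have hre : z.re ≤ ‖z + j‖ := le_trans (by simp) (re_le_norm (z + j))
  have him : |z.im| ≤ ‖z + j‖ := by simpa using abs_im_le_norm (z + j)
  have : 1 ≤ z.re⁻¹ * ‖z + j‖ := by rwa [le_inv_mul_iff₀ hz, mul_one]
  linarith

lemma one_add_abs_im_pow_le_mul_norm_prod {z : ℂ} (hz : 0 < z.re) (n : ℕ) :
    (1 + |z.im|) ^ n ≤ (z.re⁻¹ + 1) ^ n * ‖∏ j ∈ Finset.range n, (z + j)‖ :=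
  calc (1 + |z.im|) ^ n = ∏ j ∈ Finset.range n, (1 + |z.im|) := by simp
    _ ≤ ∏ j ∈ Finset.range n, ((z.re⁻¹ + 1) * ‖z + j‖) :=
      Finset.prod_le_prod (fun _ _ => by positivity)
        fun j _ => one_add_abs_im_le_mul_norm_add_natCast hz j
    _ = _ := by rw [Finset.prod_mul_distrib, Finset.prod_const, Finset.card_range, norm_prod]

lemma inv_pow_le_rpow_neg {x A : ℝ} (hx : 1 ≤ x) {n : ℕ} (hn : A ≤ n) : (x ^ n)⁻¹ ≤ x ^ (-A) := by
  rw [← Real.rpow_natCast, ← Real.rpow_neg (by linarith)]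
  exact Real.rpow_le_rpow_of_exponent_le hx (by linarith)

noncomputable def doubleMellin (g : ℝ × ℝ → ℂ) (z₁ z₂ : ℂ) : ℂ :=
  ∫ p in Ioi (0 : ℝ) ×ˢ Ioi (0 : ℝ), g p * (p.1 : ℂ) ^ (z₁ - 1) * (p.2 : ℂ) ^ (z₂ - 1)

lemma volume_restrict_Ioi_prod_Ioi :
    (volume : Measure (ℝ × ℝ)).restrict (Ioi 0 ×ˢ Ioi 0) =
      (volume.restrict (Ioi 0)).prod (volume.restrict (Ioi 0)) := by
  rw [Measure.volume_eq_prod, Measure.prod_restrict]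

theorem doubleMellin_comp_swap (g : ℝ × ℝ → ℂ) (z₁ z₂ : ℂ) :
    doubleMellin (g ∘ Prod.swap) z₂ z₁ = doubleMellin g z₁ z₂ := by
  rw [doubleMellin, doubleMellin, Measure.volume_eq_prod, ← setIntegral_prod_swap]
  congr 1 with p
  simp only [Function.comp_apply, Prod.fst_swap, Prod.snd_swap, Prod.swap_swap]
  ring

theorem doubleMellin_neg (g : ℝ × ℝ → ℂ) (z₁ z₂ : ℂ) :
    doubleMellin (-g) z₁ z₂ = -doubleMellin g z₁ z₂ := by
  simp only [doubleMellin, Pi.neg_apply, neg_mul, integral_neg]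

theorem norm_doubleMellin_le (g : ℝ × ℝ → ℂ) (z₁ z₂ : ℂ) :
    ‖doubleMellin g z₁ z₂‖ ≤
      ∫ p in Ioi (0 : ℝ) ×ˢ Ioi (0 : ℝ), ‖g p‖ * p.1 ^ (z₁.re - 1) * p.2 ^ (z₂.re - 1) := by
  refine (norm_integral_le_integral_norm _).trans_eq (setIntegral_congr_fun
    (measurableSet_Ioi.prod measurableSet_Ioi) fun p hp => ?_)
  simp [norm_cpow_eq_rpow_re_of_pos hp.1, norm_cpow_eq_rpow_re_of_pos hp.2]

theorem doubleMellin_eq_mellin_mellin {g : ℝ × ℝ → ℂ} {z₁ z₂ : ℂ}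
    (hg : IntegrableOn (fun p => g p * (p.1 : ℂ) ^ (z₁ - 1) * (p.2 : ℂ) ^ (z₂ - 1))
      (Ioi 0 ×ˢ Ioi 0)) :
    doubleMellin g z₁ z₂ = mellin (fun t => mellin (fun u => g (t, u)) z₂) z₁ := by
  rw [IntegrableOn, volume_restrict_Ioi_prod_Ioi] at hg
  rw [doubleMellin, volume_restrict_Ioi_prod_Ioi, integral_prod _ hg, mellin]
  congr 1 with t
  rw [mellin, ← integral_smul]
  congr 1 with u
  simp only [smul_eq_mul]
  ring

theorem doubleMellin_comp_smul (g : ℝ × ℝ → ℂ) {t : ℝ} (ht : 0 < t) (z₁ z₂ : ℂ) :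
    doubleMellin (fun p => g (t • p)) z₁ z₂ = (t : ℂ) ^ (-z₁ - z₂) * doubleMellin g z₁ z₂ := by
  have hT : (t : ℂ) ≠ 0 := ofReal_ne_zero.mpr ht.ne'
  have hquad : t • (Ioi (0 : ℝ) ×ˢ Ioi (0 : ℝ)) = Ioi 0 ×ˢ Ioi 0 := by
    ext p
    simp [mem_smul_set_iff_inv_smul_mem₀ ht.ne', ht]
  have hcomp : ∫ p in Ioi (0 : ℝ) ×ˢ Ioi (0 : ℝ),
      g (t • p) * ((t • p).1 : ℂ) ^ (z₁ - 1) * ((t • p).2 : ℂ) ^ (z₂ - 1) =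
      (t : ℂ) ^ (z₁ - 1) * (t : ℂ) ^ (z₂ - 1) * doubleMellin (fun p => g (t • p)) z₁ z₂ := by
    rw [doubleMellin, ← integral_const_mul]
    refine setIntegral_congr_fun (measurableSet_Ioi.prod measurableSet_Ioi) fun p hp => ?_
    simp only [Prod.smul_fst, Prod.smul_snd, smul_eq_mul, ofReal_mul,
      mul_cpow_ofReal_nonneg ht.le hp.1.le, mul_cpow_ofReal_nonneg ht.le hp.2.le]
    ring
  have key := Measure.setIntegral_comp_smul_of_pos volume
    (fun p : ℝ × ℝ => g p * (p.1 : ℂ) ^ (z₁ - 1) * (p.2 : ℂ) ^ (z₂ - 1)) (Ioi 0 ×ˢ Ioi 0) ht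
  rw [hquad, hcomp, ← doubleMellin] at key
  simp only [Module.finrank_prod, Module.finrank_self, real_smul, ofReal_inv, ofReal_pow] at key
  rw [cpow_sub _ _ hT, cpow_sub _ _ hT, cpow_one] at key
  rw [sub_eq_add_neg, cpow_add _ _ hT, cpow_neg, cpow_neg]
  have hne : ∀ z : ℂ, (t : ℂ) ^ z ≠ 0 := fun z => cpow_ne_zero_iff.mpr (Or.inl hT)
  field_simp [hne] at key ⊢
  rw [one_add_one_eq_two, mul_comm _ (doubleMellin g z₁ z₂)] at key
  exact mul_right_cancel₀ (pow_ne_zero 2 hT) key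

theorem SchwartzMap.exists_norm_le_inv_one_add_pow_mul {E F V : Type*} [NormedAddCommGroup E]
    [NormedSpace ℝ E] [NormedAddCommGroup F] [NormedSpace ℝ F] [NormedAddCommGroup V]
    [NormedSpace ℝ V] (g : 𝓢(E × F, V)) (k l : ℕ) :
    ∃ C, ∀ x y, ‖g (x, y)‖ ≤ C * ((1 + ‖x‖) ^ k)⁻¹ * ((1 + ‖y‖) ^ l)⁻¹ := by
  refine ⟨2 ^ (k + l) * ((Finset.Iic (k + l, 0)).sup fun m => SchwartzMap.seminorm ℝ m.1 m.2) g,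
    fun x y => ?_⟩
  have h := one_add_le_sup_seminorm_apply (𝕜 := ℝ) (m := (k + l, 0)) le_rfl le_rfl g (x, y)
  rw [norm_iteratedFDeriv_zero] at h
  have hxy : (1 + ‖x‖) ^ k * (1 + ‖y‖) ^ l ≤ (1 + ‖(x, y)‖) ^ (k + l) := by
    rw [pow_add]
    gcongr
    · exact norm_fst_le (x, y)
    · exact norm_snd_le (x, y)
  rw [mul_assoc, ← mul_inv, ← div_eq_mul_inv, le_div_iff₀ (by positivity)]
  calc ‖g (x, y)‖ * ((1 + ‖x‖) ^ k * (1 + ‖y‖) ^ l)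
      ≤ (1 + ‖(x, y)‖) ^ (k + l) * ‖g (x, y)‖ := by rw [mul_comm]; gcongr
    _ ≤ _ := h

namespace SchwartzMap

variable (g : 𝓢(ℝ × ℝ, ℂ)) {z₁ z₂ : ℂ} {σ₁ σ₂ : ℝ}

theorem integrableOn_doubleMellin (h₁ : 0 < z₁.re) (h₂ : 0 < z₂.re) :
    IntegrableOn (fun p : ℝ × ℝ => g p * (p.1 : ℂ) ^ (z₁ - 1) * (p.2 : ℂ) ^ (z₂ - 1))
      (Ioi 0 ×ˢ Ioi 0) := by
  obtain ⟨k, hk⟩ := exists_nat_gt (max z₁.re z₂.re)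
  obtain ⟨C, hC⟩ := g.exists_norm_le_inv_one_add_pow_mul k k
  have hK₁ := integrableOn_rpow_mul_inv_one_add_norm_pow h₁ ((le_max_left _ _).trans_lt hk)
  have hK₂ := integrableOn_rpow_mul_inv_one_add_norm_pow h₂ ((le_max_right _ _).trans_lt hk)
  have hmaj : IntegrableOn (fun p : ℝ × ℝ => C * (p.1 ^ (z₁.re - 1) * ((1 + ‖p.1‖) ^ k)⁻¹) *
      (p.2 ^ (z₂.re - 1) * ((1 + ‖p.2‖) ^ k)⁻¹)) (Ioi 0 ×ˢ Ioi 0) := by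
    rw [IntegrableOn, volume_restrict_Ioi_prod_Ioi]
    exact (hK₁.const_mul C).mul_prod hK₂
  refine hmaj.mono' ?_ ?_
  · refine ContinuousOn.aestronglyMeasurable (fun p hp => ?_)
      (measurableSet_Ioi.prod measurableSet_Ioi)
    exact ((g.continuous.continuousAt.mul ((continuousAt_ofReal_cpow_const _ _
      (Or.inr hp.1.ne')).comp continuousAt_fst)).mul ((continuousAt_ofReal_cpow_const _ _
      (Or.inr hp.2.ne')).comp continuousAt_snd)).continuousWithinAt
  · filter_upwards [ae_restrict_mem (measurableSet_Ioi.prod measurableSet_Ioi)] with p hp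
    rw [norm_mul, norm_mul, norm_cpow_eq_rpow_re_of_pos hp.1, norm_cpow_eq_rpow_re_of_pos hp.2,
      sub_re, sub_re, one_re]
    have := Real.rpow_nonneg hp.1.le (z₁.re - 1)
    have := Real.rpow_nonneg hp.2.le (z₂.re - 1)
    calc ‖g p‖ * p.1 ^ (z₁.re - 1) * p.2 ^ (z₂.re - 1)
        ≤ C * ((1 + ‖p.1‖) ^ k)⁻¹ * ((1 + ‖p.2‖) ^ k)⁻¹ * p.1 ^ (z₁.re - 1) *
            p.2 ^ (z₂.re - 1) := by gcongr; exact hC p.1 p.2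
      _ = _ := by ring

theorem exists_norm_mellin_slice_le (hz : 0 < z₂.re) (k : ℕ) :
    ∃ C, ∀ t : ℝ, ‖mellin (fun u => g (t, u)) z₂‖ ≤ C * ((1 + ‖t‖) ^ k)⁻¹ := by
  obtain ⟨l, hl⟩ := exists_nat_gt z₂.re
  obtain ⟨C, hC⟩ := g.exists_norm_le_inv_one_add_pow_mul k l
  have hK := integrableOn_rpow_mul_inv_one_add_norm_pow hz hl
  refine ⟨C * ∫ u in Ioi (0 : ℝ), u ^ (z₂.re - 1) * ((1 + ‖u‖) ^ l)⁻¹, fun t => ?_⟩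
  refine (norm_integral_le_of_norm_le (hK.const_mul (C * ((1 + ‖t‖) ^ k)⁻¹)) ?_).trans_eq
    (by rw [integral_const_mul]; ring)
  filter_upwards [ae_restrict_mem measurableSet_Ioi] with u hu
  rw [norm_smul, norm_cpow_eq_rpow_re_of_pos hu, sub_re, one_re]
  have := Real.rpow_nonneg hu.le (z₂.re - 1)
  calc u ^ (z₂.re - 1) * ‖g (t, u)‖
      ≤ u ^ (z₂.re - 1) * (C * ((1 + ‖t‖) ^ k)⁻¹ * ((1 + ‖u‖) ^ l)⁻¹) := by gcongr; exact hC t u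
    _ = _ := by ring

theorem continuous_mellin_slice (hz : 0 < z₂.re) :
    Continuous fun t : ℝ => mellin (fun u => g (t, u)) z₂ := by
  obtain ⟨l, hl⟩ := exists_nat_gt z₂.re
  obtain ⟨C, hC⟩ := g.exists_norm_le_inv_one_add_pow_mul 0 l
  refine continuous_of_dominated (bound := fun u => C * (u ^ (z₂.re - 1) * ((1 + ‖u‖) ^ l)⁻¹))
    (fun t => ?_) (fun t => ?_) ((integrableOn_rpow_mul_inv_one_add_norm_pow hz hl).const_mul C)
    (Eventually.of_forall fun u => ?_)
  · refine ContinuousOn.aestronglyMeasurable (fun u hu => ?_) measurableSet_Ioi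
    exact ((continuousAt_ofReal_cpow_const _ _ (Or.inr (ne_of_gt hu))).smul
      (g.continuous.comp (continuous_const.prodMk continuous_id)).continuousAt).continuousWithinAt
  · filter_upwards [ae_restrict_mem measurableSet_Ioi] with u hu
    rw [norm_smul, norm_cpow_eq_rpow_re_of_pos hu, sub_re, one_re]
    have := Real.rpow_nonneg hu.le (z₂.re - 1)
    calc u ^ (z₂.re - 1) * ‖g (t, u)‖
        ≤ u ^ (z₂.re - 1) * (C * ((1 + ‖t‖) ^ 0)⁻¹ * ((1 + ‖u‖) ^ l)⁻¹) := by
          gcongr; exact hC t u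
      _ = _ := by simp only [pow_zero, inv_one, mul_one]; ring
  · exact (continuous_const (y := (u : ℂ) ^ (z₂ - 1))).smul
      (g.continuous.comp (continuous_id.prodMk continuous_const))

theorem differentiableAt_doubleMellin_left (h₁ : 0 < z₁.re) (h₂ : 0 < z₂.re) :
    DifferentiableAt ℂ (fun z => doubleMellin g z z₂) z₁ := by
  have heq : (fun z => doubleMellin g z z₂) =ᶠ[𝓝 z₁]
      mellin fun t => mellin (fun u => g (t, u)) z₂ := by
    filter_upwards [(isOpen_lt continuous_const continuous_re).mem_nhds h₁] with z hz
    exact doubleMellin_eq_mellin_mellin (g.integrableOn_doubleMellin hz h₂)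
  obtain ⟨k, hk⟩ := exists_nat_gt z₁.re
  obtain ⟨C, hC⟩ := g.exists_norm_mellin_slice_le h₂ k
  exact heq.differentiableAt_iff.mpr <| mellin_differentiableAt_of_norm_le
    ((g.continuous_mellin_slice h₂).locallyIntegrable.locallyIntegrableOn _) hC h₁ hk

noncomputable def prodSwap : 𝓢(ℝ × ℝ, ℂ) :=
  compCLMOfContinuousLinearEquiv ℂ (ContinuousLinearEquiv.prodComm ℝ ℝ ℝ) g

theorem doubleMellin_prodSwap (z₁ z₂ : ℂ) :
    doubleMellin g.prodSwap z₂ z₁ = doubleMellin g z₁ z₂ :=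
  doubleMellin_comp_swap g z₁ z₂

theorem differentiableAt_doubleMellin_right (h₁ : 0 < z₁.re) (h₂ : 0 < z₂.re) :
    DifferentiableAt ℂ (fun z => doubleMellin g z₁ z) z₂ := by
  simp_rw [← g.doubleMellin_prodSwap z₁]
  exact g.prodSwap.differentiableAt_doubleMellin_left h₂ h₁

theorem hasDerivAt_slice_snd (t u : ℝ) :
    HasDerivAt (fun u => g (t, u)) (∂_{((0 : ℝ), (1 : ℝ))} g (t, u)) u := by
  have := g.differentiableAt.hasFDerivAt.comp_hasDerivAt u
    ((hasDerivAt_const u t).prodMk (hasDerivAt_id u))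
  rwa [lineDerivOp_apply_eq_fderiv]

theorem exists_norm_slice_snd_le (l : ℕ) :
    ∃ C, ∀ t u : ℝ, ‖g (t, u)‖ ≤ C * ((1 + ‖u‖) ^ l)⁻¹ := by
  obtain ⟨C, hC⟩ := g.exists_norm_le_inv_one_add_pow_mul 0 l
  exact ⟨C, fun t u => by simpa using hC t u⟩

theorem mul_doubleMellin_eq_neg_doubleMellin_lineDerivOp (h₁ : 0 < z₁.re) (h₂ : 0 < z₂.re) :
    z₂ * doubleMellin g z₁ z₂ =
      -doubleMellin (∂_{((0 : ℝ), (1 : ℝ))} g : 𝓢(ℝ × ℝ, ℂ)) z₁ (z₂ + 1) := by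
  set g' : 𝓢(ℝ × ℝ, ℂ) := ∂_{((0 : ℝ), (1 : ℝ))} g
  obtain ⟨l, hl⟩ := exists_nat_gt (z₂.re + 1)
  obtain ⟨C, hC⟩ := g.exists_norm_slice_snd_le l
  obtain ⟨C', hC'⟩ := g'.exists_norm_slice_snd_le l
  have hg' (t : ℝ) : LocallyIntegrableOn (fun u => g' (t, u)) (Ioi 0) :=
    (g'.continuous.comp (continuous_const.prodMk continuous_id)).locallyIntegrable
      |>.locallyIntegrableOn _
  have hslice (t : ℝ) :
      mellin (fun u => g' (t, u)) (z₂ + 1) = -(z₂ * mellin (fun u => g (t, u)) z₂) :=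
    mellin_deriv_eq_neg_mul_mellin (fun u _ => g.hasDerivAt_slice_snd t u) (hg' t)
      (isBigO_atTop_rpow_of_norm_le (hC t)) (isBigO_atTop_rpow_of_norm_le (hC' t))
      (isBigO_nhdsGT_zero_of_norm_le (hC t)) (isBigO_nhdsGT_zero_of_norm_le (hC' t)) hl h₂
  rw [doubleMellin_eq_mellin_mellin (g.integrableOn_doubleMellin h₁ h₂),
    doubleMellin_eq_mellin_mellin (g'.integrableOn_doubleMellin h₁ (by simp; linarith))]
  simp_rw [hslice, mellin, smul_neg, integral_neg, neg_neg, smul_eq_mul, ← integral_const_mul,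
    mul_left_comm z₂]

theorem exists_prod_mul_doubleMellin_eq (m : ℕ) :
    ∃ h : 𝓢(ℝ × ℝ, ℂ), ∀ z₁ z₂ : ℂ, 0 < z₁.re → 0 < z₂.re →
      (∏ j ∈ Finset.range m, (z₂ + j)) * doubleMellin g z₁ z₂ = doubleMellin h z₁ (z₂ + m) := by
  induction m with
  | zero => exact ⟨g, fun z₁ z₂ _ _ => by simp⟩
  | succ m ih =>
    obtain ⟨h, hh⟩ := ih
    refine ⟨-∂_{((0 : ℝ), (1 : ℝ))} h, fun z₁ z₂ h₁ h₂ => ?_⟩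
    have hm : 0 < (z₂ + m).re := by simp; positivity
    rw [Finset.prod_range_succ, mul_right_comm, hh z₁ z₂ h₁ h₂, mul_comm,
      h.mul_doubleMellin_eq_neg_doubleMellin_lineDerivOp h₁ hm, FunLike.coe_neg, doubleMellin_neg]
    push_cast [add_assoc]
    rfl

theorem exists_prod_mul_prod_mul_doubleMellin_eq (n m : ℕ) :
    ∃ h : 𝓢(ℝ × ℝ, ℂ), ∀ z₁ z₂ : ℂ, 0 < z₁.re → 0 < z₂.re →
      (∏ j ∈ Finset.range n, (z₁ + j)) * (∏ j ∈ Finset.range m, (z₂ + j)) *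
        doubleMellin g z₁ z₂ = doubleMellin h (z₁ + n) (z₂ + m) := by
  obtain ⟨h₁, hh₁⟩ := g.exists_prod_mul_doubleMellin_eq m
  obtain ⟨h₂, hh₂⟩ := h₁.prodSwap.exists_prod_mul_doubleMellin_eq n
  refine ⟨h₂.prodSwap, fun z₁ z₂ hz₁ hz₂ => ?_⟩
  have hm : 0 < (z₂ + m).re := by simp; positivity
  rw [mul_assoc, hh₁ z₁ z₂ hz₁ hz₂, ← h₁.doubleMellin_prodSwap, hh₂ _ _ hm hz₁,
    doubleMellin_prodSwap]

theorem exists_pow_mul_pow_mul_norm_doubleMellin_le (hσ₁ : 0 < σ₁) (hσ₂ : 0 < σ₂) (n m : ℕ) :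
    ∃ C, ∀ t₁ t₂ : ℝ, (1 + |t₁|) ^ n * (1 + |t₂|) ^ m *
      ‖doubleMellin g (σ₁ + t₁ * I) (σ₂ + t₂ * I)‖ ≤ C := by
  obtain ⟨h, hh⟩ := g.exists_prod_mul_prod_mul_doubleMellin_eq n m
  refine ⟨(σ₁⁻¹ + 1) ^ n * (σ₂⁻¹ + 1) ^ m * ∫ p in Ioi (0 : ℝ) ×ˢ Ioi (0 : ℝ),
    ‖h p‖ * p.1 ^ (σ₁ + n - 1) * p.2 ^ (σ₂ + m - 1), fun t₁ t₂ => ?_⟩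
  set z₁ : ℂ := σ₁ + t₁ * I
  set z₂ : ℂ := σ₂ + t₂ * I
  have hz₁ : 0 < z₁.re := by simpa [z₁] using hσ₁
  have hz₂ : 0 < z₂.re := by simpa [z₂] using hσ₂
  have hP₁ := one_add_abs_im_pow_le_mul_norm_prod hz₁ n
  have hP₂ := one_add_abs_im_pow_le_mul_norm_prod hz₂ m
  have hbound := norm_doubleMellin_le h (z₁ + n) (z₂ + m)
  simp only [z₁, z₂, add_re, ofReal_re, mul_re, I_re, I_im, ofReal_im, natCast_re, add_im,
    mul_im, mul_zero, mul_one, sub_zero, zero_add, add_zero] at hP₁ hP₂ hbound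
  calc (1 + |t₁|) ^ n * (1 + |t₂|) ^ m * ‖doubleMellin g z₁ z₂‖
      ≤ ((σ₁⁻¹ + 1) ^ n * ‖∏ j ∈ Finset.range n, (z₁ + j)‖) *
          ((σ₂⁻¹ + 1) ^ m * ‖∏ j ∈ Finset.range m, (z₂ + j)‖) * ‖doubleMellin g z₁ z₂‖ := by
        gcongr
    _ = (σ₁⁻¹ + 1) ^ n * (σ₂⁻¹ + 1) ^ m * ‖(∏ j ∈ Finset.range n, (z₁ + j)) *
          (∏ j ∈ Finset.range m, (z₂ + j)) * doubleMellin g z₁ z₂‖ := by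
        rw [norm_mul, norm_mul]; ring
    _ ≤ _ := by
        rw [hh z₁ z₂ hz₁ hz₂]
        gcongr

theorem exists_norm_doubleMellin_le_rpow_neg (hσ₁ : 0 < σ₁) (hσ₂ : 0 < σ₂) (A₁ A₂ : ℝ) :
    ∃ C, ∀ t₁ t₂ : ℝ, ‖doubleMellin g (σ₁ + t₁ * I) (σ₂ + t₂ * I)‖ ≤
      C * (1 + |t₁|) ^ (-A₁) * (1 + |t₂|) ^ (-A₂) := by
  obtain ⟨C, hC⟩ := g.exists_pow_mul_pow_mul_norm_doubleMellin_le hσ₁ hσ₂ ⌈A₁⌉₊ ⌈A₂⌉₊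
  have hC₀ : 0 ≤ C := (by positivity : (0 : ℝ) ≤ _).trans (hC 0 0)
  refine ⟨C, fun t₁ t₂ => ?_⟩
  have h₁ : (1 : ℝ) ≤ 1 + |t₁| := by simp
  have h₂ : (1 : ℝ) ≤ 1 + |t₂| := by simp
  calc ‖doubleMellin g (σ₁ + t₁ * I) (σ₂ + t₂ * I)‖
      = (1 + |t₁|) ^ ⌈A₁⌉₊ * (1 + |t₂|) ^ ⌈A₂⌉₊ * ‖doubleMellin g (σ₁ + t₁ * I) (σ₂ + t₂ * I)‖ *
          ((1 + |t₁|) ^ ⌈A₁⌉₊)⁻¹ * ((1 + |t₂|) ^ ⌈A₂⌉₊)⁻¹ := by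
        field_simp
    _ ≤ C * (1 + |t₁|) ^ (-A₁) * (1 + |t₂|) ^ (-A₂) := by
        gcongr
        · exact hC t₁ t₂
        · exact inv_pow_le_rpow_neg h₁ (Nat.le_ceil A₁)
        · exact inv_pow_le_rpow_neg h₂ (Nat.le_ceil A₂)

end SchwartzMap

noncomputable def planeEmbedding (e : ℝ) : ℝ × ℝ →L[ℝ] (Fin 4 → ℝ) :=
  LinearMap.toContinuousLinearMap
    { toFun := fun p => ![0, 0, p.1, e * p.2]
      map_add' := fun p q => by ext i; fin_cases i <;> simp; ring
      map_smul' := fun c p => by ext i; fin_cases i <;> simp; ring }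

lemma planeEmbedding_apply (e : ℝ) (p : ℝ × ℝ) : planeEmbedding e p = ![0, 0, p.1, e * p.2] :=
  rfl

lemma norm_le_planeEmbedding {e : ℝ} (he : e ≠ 0) (p : ℝ × ℝ) :
    ‖p‖ ≤ (1 + |e|⁻¹) * (1 + ‖planeEmbedding e p‖) ^ 1 := by
  have h₁ : |p.1| ≤ ‖planeEmbedding e p‖ := by
    simpa [planeEmbedding_apply] using norm_le_pi_norm (planeEmbedding e p) 2
  have h₂ : |e| * |p.2| ≤ ‖planeEmbedding e p‖ := by
    simpa [planeEmbedding_apply, abs_mul] using norm_le_pi_norm (planeEmbedding e p) 3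
  have h₂' : |p.2| ≤ |e|⁻¹ * ‖planeEmbedding e p‖ := by
    rwa [le_inv_mul_iff₀ (abs_pos.mpr he)]
  have : 0 ≤ ‖planeEmbedding e p‖ := norm_nonneg _
  have : 0 ≤ |e|⁻¹ := by positivity
  rw [pow_one, norm_prod_le_iff]
  constructor <;> simp only [Real.norm_eq_abs] <;> nlinarith

noncomputable def restrictPlane {e : ℝ} (he : e ≠ 0) (f : 𝓢(Fin 4 → ℝ, ℂ)) : 𝓢(ℝ × ℝ, ℂ) :=
  SchwartzMap.compCLM ℂ (planeEmbedding e).hasTemperateGrowth ⟨1, _, norm_le_planeEmbedding he⟩ f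

lemma restrictPlane_apply {e : ℝ} (he : e ≠ 0) (f : 𝓢(Fin 4 → ℝ, ℂ)) (p : ℝ × ℝ) :
    restrictPlane he f p = f ![0, 0, p.1, e * p.2] :=
  rfl

/-- Properties of the double Mellin transform `Σ^ε(f,z₁,z₂)` for a Schwartz function `f`:
(i) absolute convergence and separate holomorphy in `{Re z₁ > 0, Re z₂ > 0}`;
(ii) rapid decay in vertical strips;
(iii) the dilation law `Σ^ε(f^t, z₁, z₂) = t^{−z₁−z₂} Σ^ε(f, z₁, z₂)` for `f^t(x) = f(tx)`. -/
theorem sigma2_properties (f : SchwartzMap (Fin 4 → ℝ) ℂ) (e : ℝ) (he : e = 1 ∨ e = -1) :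
    (∀ z₁ z₂ : ℂ, 0 < z₁.re → 0 < z₂.re →
      IntegrableOn (fun p : ℝ × ℝ =>
          f ![0, 0, p.1, e * p.2] * (p.1 : ℂ) ^ (z₁ - 1) * (p.2 : ℂ) ^ (z₂ - 1))
        (Set.Ioi (0 : ℝ) ×ˢ Set.Ioi (0 : ℝ)) ∧
      DifferentiableAt ℂ (fun z => Sigma2 (⇑f) e z z₂) z₁ ∧
      DifferentiableAt ℂ (fun z => Sigma2 (⇑f) e z₁ z) z₂) ∧
    (∀ σ₁ σ₂ A₁ A₂ : ℝ, 0 < σ₁ → 0 < σ₂ → 0 < A₁ → 0 < A₂ → ∃ C : ℝ, ∀ t₁ t₂ : ℝ,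
      ‖Sigma2 (⇑f) e ((σ₁ : ℂ) + t₁ * Complex.I) ((σ₂ : ℂ) + t₂ * Complex.I)‖
        ≤ C * (1 + |t₁|) ^ (-A₁) * (1 + |t₂|) ^ (-A₂)) ∧
    (∀ t : ℝ, 0 < t → ∀ g : SchwartzMap (Fin 4 → ℝ) ℂ, (∀ x, g x = f (t • x)) →
      ∀ z₁ z₂ : ℂ, 0 < z₁.re → 0 < z₂.re →
        Sigma2 (⇑g) e z₁ z₂ = (t : ℂ) ^ (-z₁ - z₂) * Sigma2 (⇑f) e z₁ z₂) := by
  have he₀ : e ≠ 0 := by rcases he with rfl | rfl <;> norm_num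
  set g := restrictPlane he₀ f
  have hSigma : Sigma2 (⇑f) e = doubleMellin g := rfl
  refine ⟨fun z₁ z₂ h₁ h₂ => ⟨g.integrableOn_doubleMellin h₁ h₂, ?_, ?_⟩,
    fun σ₁ σ₂ A₁ A₂ h₁ h₂ _ _ => ?_, fun t ht f' hf' z₁ z₂ _ _ => ?_⟩
  · simpa only [hSigma] using g.differentiableAt_doubleMellin_left h₁ h₂
  · simpa only [hSigma] using g.differentiableAt_doubleMellin_right h₁ h₂
  · simpa only [hSigma] using g.exists_norm_doubleMellin_le_rpow_neg h₁ h₂ A₁ A₂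
  · have hf'g : Sigma2 (⇑f') e z₁ z₂ = doubleMellin (fun p => g (t • p)) z₁ z₂ := by
      simp only [Sigma2, doubleMellin, hf', g, restrictPlane_apply, Prod.smul_fst, Prod.smul_snd,
        Matrix.smul_cons, Matrix.smul_empty, smul_eq_mul, mul_zero, mul_left_comm t e]
    rw [hf'g, doubleMellin_comp_smul _ ht, hSigma]
end

section
/- For every real A > 4 and every integer q ≥ 1 there exists a constant C = C(A,q) such that for all real t ≥ 1: ∑ 1/(1 + ‖(t³x₁/q², t·x₂/q², t⁻¹x₃/q², t⁻³x₄/q²)‖₂^A) ≤ C · t^{−(A−6)}, where the sum runs over all integer quadruples (x₁,x₂,x₃,x₄) ∈ ℤ⁴ with (x₁,x₂) ≠ (0,0) and ‖·‖₂ denotes the Euclidean norm on ℝ⁴. -/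
/-!
The summand is at most `E ^ (-A)`, where `E` is the Euclidean norm of the rescaled vector
`(t³x₁, t x₂, t⁻¹x₃, t⁻³x₄) / q²`. Put `a = (t / q²) ‖(x₁, x₂)‖_∞`; since `t ≥ 1` we have `E ≥ a`,
`2E ≥ a + t⁻¹|x₃|/q²` and `2E ≥ a + t⁻³|x₄|/q²`, hence
`E ^ (-A) ≤ 16 a ^ (4 - A) (a + t⁻¹|x₃|/q²)⁻² (a + t⁻³|x₄|/q²)⁻²`.
For `0 < λ ≤ a`, comparison with a telescoping sum gives `∑ₙ (a + λ|n|)⁻² ≤ 3 / (aλ)`, so summing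
over `x₃` and `x₄` leaves `144 q⁴ t⁴ a ^ (2 - A) = 144 q^(2A) t^(6 - A) ‖(x₁, x₂)‖ ^ (2 - A)`,
which is summable over `(x₁, x₂) ≠ 0` because `A - 2 > 2`.
-/

open Finset

theorem summable_and_tsum_inv_add_mul_succ_sq_le {a lam : ℝ} (ha : 0 < a) (hlam : 0 < lam) :
    Summable (fun m : ℕ => ((a + lam * (m + 1)) ^ 2)⁻¹) ∧
      ∑' m : ℕ, ((a + lam * (m + 1)) ^ 2)⁻¹ ≤ (a * lam)⁻¹ := by
  set g : ℕ → ℝ := fun m => (lam * (a + lam * m))⁻¹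
  have hterm (m : ℕ) : ((a + lam * (m + 1)) ^ 2)⁻¹ ≤ g m - g (m + 1) := by
    have : 0 < a + lam * m := by positivity
    rw [← sub_nonneg]
    simp only [g, Nat.cast_add, Nat.cast_one]
    field_simp
    ring_nf
    positivity
  have hpartial (M : ℕ) : ∑ m ∈ range M, ((a + lam * (m + 1)) ^ 2)⁻¹ ≤ (a * lam)⁻¹ :=
    calc ∑ m ∈ range M, ((a + lam * (m + 1)) ^ 2)⁻¹ ≤ ∑ m ∈ range M, (g m - g (m + 1)) :=
          sum_le_sum fun m _ => hterm m
      _ = g 0 - g M := sum_range_sub' g M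
      _ ≤ g 0 := sub_le_self _ (by positivity)
      _ = (a * lam)⁻¹ := by simp [g, mul_comm]
  exact ⟨summable_of_sum_range_le (fun _ => by positivity) hpartial,
    Real.tsum_le_of_sum_range_le (fun _ => by positivity) hpartial⟩

theorem summable_and_tsum_inv_add_mul_abs_sq_le {a lam : ℝ} (hlam : 0 < lam) (hle : lam ≤ a) :
    Summable (fun n : ℤ => ((a + lam * |(n : ℝ)|) ^ 2)⁻¹) ∧
      ∑' n : ℤ, ((a + lam * |(n : ℝ)|) ^ 2)⁻¹ ≤ 3 * (a * lam)⁻¹ := by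
  have ha : 0 < a := hlam.trans_le hle
  set f : ℤ → ℝ := fun n => ((a + lam * |(n : ℝ)|) ^ 2)⁻¹
  obtain ⟨hsucc, hsucc_le⟩ := summable_and_tsum_inv_add_mul_succ_sq_le ha hlam
  have hpos : HasSum (fun m : ℕ => f (m + 1)) (∑' m : ℕ, ((a + lam * (m + 1)) ^ 2)⁻¹) := by
    convert hsucc.hasSum using 1 with m
    funext m
    simp only [f]
    push_cast
    rw [abs_of_nonneg (by positivity)]
  have hneg : HasSum (fun m : ℕ => f (-(m + 1))) (∑' m : ℕ, ((a + lam * (m + 1)) ^ 2)⁻¹) := by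
    convert hpos using 1 with m
    funext m
    simp only [f, Int.cast_neg, abs_neg]
  have hf0 : f 0 ≤ (a * lam)⁻¹ := by
    simpa [f, sq] using inv_anti₀ (by positivity) (mul_le_mul_of_nonneg_left hle ha.le)
  have hsum := hpos.of_add_one_of_neg_add_one hneg
  refine ⟨hsum.summable, ?_⟩
  rw [hsum.tsum_eq]
  linarith

theorem summable_and_tsum_prod_le {α β : Type*} {f : α × β → ℝ} {g : α → ℝ} (hf : 0 ≤ f)
    (hfib : ∀ a, Summable fun b => f (a, b)) (hfib_le : ∀ a, ∑' b, f (a, b) ≤ g a)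
    (hg : Summable g) : Summable f ∧ ∑' p, f p ≤ ∑' a, g a := by
  have hfib_sum : Summable fun a => ∑' b, f (a, b) :=
    hg.of_nonneg_of_le (fun a => tsum_nonneg fun b => hf _) hfib_le
  have hs : Summable f := (summable_prod_of_nonneg hf).2 ⟨hfib, hfib_sum⟩
  refine ⟨hs, ?_⟩
  rw [hs.tsum_prod' hfib]
  exact hfib_sum.tsum_le_tsum hfib_le hg

theorem summable_and_tsum_le_of_le_comp_injective {ι κ : Type*} {f : ι → ℝ} {g : κ → ℝ}
    {e : ι → κ} (he : Function.Injective e) (hf : 0 ≤ f) (hfg : ∀ i, f i ≤ g (e i))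
    (hg : 0 ≤ g) (hg_sum : Summable g) : Summable f ∧ ∑' i, f i ≤ ∑' k, g k := by
  have hs : Summable f := (hg_sum.comp_injective he).of_nonneg_of_le hf hfg
  exact ⟨hs, hs.tsum_le_tsum_of_inj e he (fun k _ => hg k) hfg hg_sum⟩

theorem one_le_norm_of_ne_zero {ι : Type*} [Fintype ι] {v : ι → ℤ} (hv : v ≠ 0) : 1 ≤ ‖v‖ := by
  obtain ⟨i, hi⟩ := Function.ne_iff.mp hv
  calc (1 : ℝ) ≤ ‖v i‖ := by rw [Int.norm_eq_abs]; exact_mod_cast Int.one_le_abs hi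
    _ ≤ ‖v‖ := norm_le_pi_norm v i

theorem mul_norm_le_of_forall_mul_norm_le {ι : Type*} [Fintype ι] {v : ι → ℤ} {c r : ℝ}
    (hc : 0 < c) (hr : 0 ≤ r) (h : ∀ i, c * ‖v i‖ ≤ r) : c * ‖v‖ ≤ r := by
  rw [← le_div_iff₀' hc]
  exact (pi_norm_le_iff_of_nonneg (by positivity)).2 fun i => (le_div_iff₀' hc).2 (h i)

noncomputable def fiberWeight (A a l₃ l₄ : ℝ) (mn : ℤ × ℤ) : ℝ :=
  16 * a ^ (4 - A) * (((a + l₃ * |(mn.1 : ℝ)|) ^ 2)⁻¹ * ((a + l₄ * |(mn.2 : ℝ)|) ^ 2)⁻¹)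

theorem fiberWeight_nonneg (A : ℝ) {a : ℝ} (ha : 0 ≤ a) (l₃ l₄ : ℝ) (mn : ℤ × ℤ) :
    0 ≤ fiberWeight A a l₃ l₄ mn := by
  unfold fiberWeight; positivity

theorem one_div_one_add_rpow_le_fiberWeight {A E a l₃ l₄ : ℝ} (hA : 4 ≤ A) (ha : 0 < a)
    (hl₃ : 0 ≤ l₃) (hl₄ : 0 ≤ l₄) (m n : ℤ) (haE : a ≤ E) (hmE : l₃ * |(m : ℝ)| ≤ E)
    (hnE : l₄ * |(n : ℝ)| ≤ E) :
    1 / (1 + E ^ A) ≤ fiberWeight A a l₃ l₄ (m, n) := by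
  have hE : 0 < E := ha.trans_le haE
  have hsq (b : ℝ) (hb : 0 ≤ b) (hbE : b ≤ E) : (4 * E ^ 2)⁻¹ ≤ ((a + b) ^ 2)⁻¹ :=
    inv_anti₀ (by positivity) (by nlinarith)
  calc 1 / (1 + E ^ A) ≤ (E ^ A)⁻¹ := by
        rw [one_div]; exact inv_anti₀ (by positivity) (by linarith)
    _ = 16 * E ^ (4 - A) * ((4 * E ^ 2)⁻¹ * (4 * E ^ 2)⁻¹) := by
        rw [Real.rpow_sub hE]
        field_simp
        norm_num
    _ ≤ fiberWeight A a l₃ l₄ (m, n) := by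
        unfold fiberWeight
        gcongr 16 * ?_ * (?_ * ?_)
        · exact Real.rpow_le_rpow_of_nonpos ha haE (by linarith)
        · exact hsq _ (by positivity) hmE
        · exact hsq _ (by positivity) hnE

theorem summable_and_tsum_fiberWeight_le (A : ℝ) {a l₃ l₄ : ℝ} (hl₃ : 0 < l₃) (hl₄ : 0 < l₄)
    (h₃ : l₃ ≤ a) (h₄ : l₄ ≤ a) :
    Summable (fiberWeight A a l₃ l₄) ∧
      ∑' mn, fiberWeight A a l₃ l₄ mn ≤ 144 * a ^ (2 - A) * (l₃ * l₄)⁻¹ := by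
  have ha : 0 < a := hl₃.trans_le h₃
  obtain ⟨hs₃, hle₃⟩ := summable_and_tsum_inv_add_mul_abs_sq_le hl₃ h₃
  obtain ⟨hs₄, hle₄⟩ := summable_and_tsum_inv_add_mul_abs_sq_le hl₄ h₄
  have hprod := hs₃.mul_of_nonneg hs₄ (fun _ => by positivity) (fun _ => by positivity)
  refine ⟨hprod.mul_left _, ?_⟩
  simp only [fiberWeight]
  rw [tsum_mul_left, ← hs₃.tsum_mul_tsum hs₄ hprod]
  calc 16 * a ^ (4 - A) * ((∑' m : ℤ, ((a + l₃ * |(m : ℝ)|) ^ 2)⁻¹) *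
        ∑' n : ℤ, ((a + l₄ * |(n : ℝ)|) ^ 2)⁻¹)
      ≤ 16 * a ^ (4 - A) * ((3 * (a * l₃)⁻¹) * (3 * (a * l₄)⁻¹)) := by gcongr
    _ = 144 * a ^ (2 - A) * (l₃ * l₄)⁻¹ := by
        rw [show (4 : ℝ) - A = 2 - A + 2 by ring, Real.rpow_add ha, Real.rpow_two]
        field_simp
        ring

theorem summable_and_tsum_fiberWeight_prod_le {A l₁ l₃ l₄ : ℝ} (hA : 4 < A) (hl₃ : 0 < l₃)
    (hl₄ : 0 < l₄) (h₃ : l₃ ≤ l₁) (h₄ : l₄ ≤ l₁) :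
    Summable (fun p : {v : Fin 2 → ℤ // v ≠ 0} × ℤ × ℤ =>
        fiberWeight A (l₁ * ‖p.1.1‖) l₃ l₄ p.2) ∧
      ∑' p : {v : Fin 2 → ℤ // v ≠ 0} × ℤ × ℤ, fiberWeight A (l₁ * ‖p.1.1‖) l₃ l₄ p.2 ≤
        144 * l₁ ^ (2 - A) * (l₃ * l₄)⁻¹ * ∑' v : {v : Fin 2 → ℤ // v ≠ 0}, ‖v.1‖ ^ (-(A - 2)) := by
  have hl₁ : 0 < l₁ := hl₃.trans_le h₃
  have hscale (v : {v : Fin 2 → ℤ // v ≠ 0}) : l₁ ≤ l₁ * ‖v.1‖ :=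
    le_mul_of_one_le_right hl₁.le (one_le_norm_of_ne_zero v.2)
  have hfiber (v : {v : Fin 2 → ℤ // v ≠ 0}) :=
    summable_and_tsum_fiberWeight_le A hl₃ hl₄ (h₃.trans (hscale v)) (h₄.trans (hscale v))
  have hlattice : Summable fun v : {v : Fin 2 → ℤ // v ≠ 0} => ‖v.1‖ ^ (-(A - 2)) :=
    (EisensteinSeries.summable_one_div_norm_rpow (by linarith)).subtype _
  rw [← tsum_mul_left]
  refine summable_and_tsum_prod_le (fun p => fiberWeight_nonneg A (by positivity) l₃ l₄ p.2)
    (fun v => (hfiber v).1) (fun v => (hfiber v).2.trans_eq ?_) (hlattice.mul_left _)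
  rw [Real.mul_rpow hl₁.le (norm_nonneg _), neg_sub]
  ring

theorem abs_le_sqrt_sum_sq_four (y₀ y₁ y₂ y₃ : ℝ) :
    |y₀| ≤ √(y₀ ^ 2 + y₁ ^ 2 + y₂ ^ 2 + y₃ ^ 2) ∧ |y₁| ≤ √(y₀ ^ 2 + y₁ ^ 2 + y₂ ^ 2 + y₃ ^ 2) ∧
      |y₂| ≤ √(y₀ ^ 2 + y₁ ^ 2 + y₂ ^ 2 + y₃ ^ 2) ∧ |y₃| ≤ √(y₀ ^ 2 + y₁ ^ 2 + y₂ ^ 2 + y₃ ^ 2) := by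
  refine ⟨?_, ?_, ?_, ?_⟩ <;> refine Real.abs_le_sqrt ?_ <;>
    linarith [sq_nonneg y₀, sq_nonneg y₁, sq_nonneg y₂, sq_nonneg y₃]

theorem summand_le_fiberWeight {A Q t : ℝ} (hA : 4 ≤ A) (hQ : 0 < Q) (ht : 1 ≤ t)
    (x : Fin 4 → ℤ) (hx : ![x 0, x 1] ≠ 0) :
    1 / (1 + Real.sqrt ((t ^ 3 * (x 0 : ℝ) / Q) ^ 2 + (t * (x 1 : ℝ) / Q) ^ 2
        + (t⁻¹ * (x 2 : ℝ) / Q) ^ 2 + ((t ^ 3)⁻¹ * (x 3 : ℝ) / Q) ^ 2) ^ A)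
      ≤ fiberWeight A (t / Q * ‖![x 0, x 1]‖) (t⁻¹ / Q) ((t ^ 3)⁻¹ / Q) (x 2, x 3) := by
  have ht0 : 0 < t := one_pos.trans_le ht
  have hcoord {c : ℝ} (hc : 0 < c) (k : ℤ) : |c * k / Q| = c / Q * |(k : ℝ)| := by
    rw [abs_div, abs_mul, abs_of_pos hc, abs_of_pos hQ]; ring
  obtain ⟨h₀, h₁, h₂, h₃⟩ := abs_le_sqrt_sum_sq_four (t ^ 3 * (x 0 : ℝ) / Q) (t * (x 1 : ℝ) / Q)
    (t⁻¹ * (x 2 : ℝ) / Q) ((t ^ 3)⁻¹ * (x 3 : ℝ) / Q)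
  set E := Real.sqrt ((t ^ 3 * (x 0 : ℝ) / Q) ^ 2 + (t * (x 1 : ℝ) / Q) ^ 2
    + (t⁻¹ * (x 2 : ℝ) / Q) ^ 2 + ((t ^ 3)⁻¹ * (x 3 : ℝ) / Q) ^ 2)
  rw [hcoord (by positivity : (0 : ℝ) < t ^ 3)] at h₀
  rw [hcoord ht0] at h₁
  rw [hcoord (by positivity : (0 : ℝ) < t⁻¹)] at h₂
  rw [hcoord (by positivity : (0 : ℝ) < (t ^ 3)⁻¹)] at h₃
  have hE : t / Q * ‖![x 0, x 1]‖ ≤ E := by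
    refine mul_norm_le_of_forall_mul_norm_le (by positivity) (Real.sqrt_nonneg _) fun i => ?_
    fin_cases i
    · have : t / Q ≤ t ^ 3 / Q := by gcongr; exact le_self_pow₀ ht (by norm_num)
      simpa [Int.norm_eq_abs] using (mul_le_mul_of_nonneg_right this (abs_nonneg _)).trans h₀
    · simpa [Int.norm_eq_abs] using h₁
  exact one_div_one_add_rpow_le_fiberWeight hA
    (mul_pos (by positivity) (one_pos.trans_le (one_le_norm_of_ne_zero hx))) (by positivity)
    (by positivity) _ _ hE h₂ h₃

def splitCoords (x : {x : Fin 4 → ℤ // ¬(x 0 = 0 ∧ x 1 = 0)}) :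
    {v : Fin 2 → ℤ // v ≠ 0} × ℤ × ℤ :=
  (⟨![x.1 0, x.1 1], fun h => x.2 ⟨congrFun h 0, congrFun h 1⟩⟩, x.1 2, x.1 3)

theorem splitCoords_injective : Function.Injective splitCoords := by
  intro x y h
  simp only [splitCoords, Prod.mk.injEq, Subtype.mk.injEq] at h
  obtain ⟨h01, h2, h3⟩ := h
  ext i
  fin_cases i
  exacts [congrFun h01 0, congrFun h01 1, h2, h3]

theorem scale_factor_eq {Q t A : ℝ} (hQ : 0 < Q) (ht : 0 < t) :
    (t / Q) ^ (2 - A) * (t⁻¹ / Q * ((t ^ 3)⁻¹ / Q))⁻¹ = Q ^ A * t ^ (-(A - 6)) := by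
  have hQA : Q ^ A = Q ^ 2 / Q ^ (2 - A) := by
    rw [← Real.rpow_natCast, ← Real.rpow_sub hQ]; norm_num
  rw [Real.div_rpow ht.le hQ.le, hQA, show -(A - 6) = 2 - A + 4 by ring, Real.rpow_add ht]
  field_simp
  norm_num

/-- For `A > 4` and `q ≥ 1` there is `C = C(A,q)` such that for all `t ≥ 1`, the sum over
integer quadruples `(x₁,x₂,x₃,x₄)` with `(x₁,x₂) ≠ (0,0)` of
`1/(1 + ‖(t³x₁/q², t x₂/q², t⁻¹x₃/q², t⁻³x₄/q²)‖₂^A)` converges and is at most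
`C · t^{−(A−6)}`. -/
theorem lattice_sum_decay (A : ℝ) (hA : 4 < A) (q : ℕ) (hq : 1 ≤ q) :
    ∃ C : ℝ, ∀ t : ℝ, 1 ≤ t →
      Summable (fun x : {x : Fin 4 → ℤ // ¬(x 0 = 0 ∧ x 1 = 0)} =>
        1 / (1 + Real.sqrt ((t ^ 3 * (x.1 0 : ℝ) / (q : ℝ) ^ 2) ^ 2
          + (t * (x.1 1 : ℝ) / (q : ℝ) ^ 2) ^ 2
          + (t⁻¹ * (x.1 2 : ℝ) / (q : ℝ) ^ 2) ^ 2
          + ((t ^ 3)⁻¹ * (x.1 3 : ℝ) / (q : ℝ) ^ 2) ^ 2) ^ A)) ∧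
      (∑' x : {x : Fin 4 → ℤ // ¬(x 0 = 0 ∧ x 1 = 0)},
        1 / (1 + Real.sqrt ((t ^ 3 * (x.1 0 : ℝ) / (q : ℝ) ^ 2) ^ 2
          + (t * (x.1 1 : ℝ) / (q : ℝ) ^ 2) ^ 2
          + (t⁻¹ * (x.1 2 : ℝ) / (q : ℝ) ^ 2) ^ 2
          + ((t ^ 3)⁻¹ * (x.1 3 : ℝ) / (q : ℝ) ^ 2) ^ 2) ^ A))
        ≤ C * t ^ (-(A - 6)) := by
  set Q : ℝ := (q : ℝ) ^ 2
  have hQ : 0 < Q := by positivity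
  refine ⟨144 * Q ^ A * ∑' v : {v : Fin 2 → ℤ // v ≠ 0}, ‖v.1‖ ^ (-(A - 2)), fun t ht => ?_⟩
  have ht0 : 0 < t := one_pos.trans_le ht
  have h₃ : t⁻¹ / Q ≤ t / Q := by gcongr; exact (inv_le_one_of_one_le₀ ht).trans ht
  have h₄ : (t ^ 3)⁻¹ / Q ≤ t / Q := by
    gcongr; exact (inv_le_one_of_one_le₀ (one_le_pow₀ ht)).trans ht
  obtain ⟨hG, hG_le⟩ := summable_and_tsum_fiberWeight_prod_le hA (by positivity) (by positivity) h₃ h₄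
  obtain ⟨hf, hf_le⟩ := summable_and_tsum_le_of_le_comp_injective splitCoords_injective
    (fun x => by positivity) (fun x => summand_le_fiberWeight hA.le hQ ht x.1 (splitCoords x).1.2)
    (fun p => fiberWeight_nonneg A (by positivity) _ _ p.2) hG
  refine ⟨hf, hf_le.trans (hG_le.trans_eq ?_)⟩
  rw [mul_assoc 144, scale_factor_eq hQ ht0]
  ring
end
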